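/- arXiv:1606.05113 — 12 statements merged into one kernel-verified Lean document; each statement's English description precedes it below -/
import Mathlib

section
/- Let J be convex and absolutely one-homogeneous on a Banach space X, v ∈ X, and p ∈ ∂J(v). Define ICB_J^p(u,v) = inf over decompositions u = φ + ψ of D_J^p(φ,v) + D_J^{-p}(ψ,-v). Then the set M^IC = {u ∈ X | ICB_J^p(u,v) = 0} is a nonempty linear subspace of X. -/
/-!
Since `p ∈ ∂J(v)` and `J` is absolutely one-homogeneous, `⟨p, v⟩ = J v` and `|⟨p, u⟩| ≤ J u`,
so the cost of a decomposition `u = φ + ψ` simplifies to `(J φ - ⟨p, φ⟩) + (J ψ + ⟨p, ψ⟩) ≥ 0`.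
This cost is subadditive and positively homogeneous in the pair `(φ, ψ)`, and invariant under
`(φ, ψ) ↦ (-ψ, -φ)`. Hence decompositions of small cost can be added and rescaled (swapping the
parts for negative scalars), so the vectors of zero infimal cost form a linear subspace.
-/

section InfimalDecomposition

variable {X : Type*} [AddCommGroup X] (C : X → X → ℝ)

def HasNullDecompositions (u : X) : Prop :=
  ∀ ε > 0, ∃ φ ψ : X, φ + ψ = u ∧ C φ ψ < ε

theorem sInf_decompositionCosts_eq_zero_iff (hC : ∀ φ ψ, 0 ≤ C φ ψ) (u : X) :
    sInf {r : ℝ | ∃ φ ψ : X, φ + ψ = u ∧ r = C φ ψ} = 0 ↔ HasNullDecompositions C u := by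
  have hne : {r : ℝ | ∃ φ ψ : X, φ + ψ = u ∧ r = C φ ψ}.Nonempty := ⟨_, u, 0, add_zero u, rfl⟩
  constructor
  · intro h ε hε
    obtain ⟨_, ⟨φ, ψ, hsum, rfl⟩, hlt⟩ := exists_lt_of_csInf_lt hne (h.symm ▸ hε)
    exact ⟨φ, ψ, hsum, hlt⟩
  · intro h
    refine csInf_eq_of_forall_ge_of_forall_gt_exists_lt hne ?_ fun ε hε => ?_
    · rintro _ ⟨φ, ψ, -, rfl⟩
      exact hC φ ψ
    · obtain ⟨φ, ψ, hsum, hlt⟩ := h ε hε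
      exact ⟨_, ⟨φ, ψ, hsum, rfl⟩, hlt⟩

variable {C}

theorem HasNullDecompositions.zero [Module ℝ X]
    (hsmul : ∀ c : ℝ, 0 ≤ c → ∀ φ ψ, C (c • φ) (c • ψ) = c * C φ ψ) :
    HasNullDecompositions C 0 := by
  intro ε hε
  have h00 : C 0 0 = 0 := by simpa using hsmul 0 le_rfl 0 0
  exact ⟨0, 0, add_zero 0, h00 ▸ hε⟩

theorem HasNullDecompositions.add
    (hadd : ∀ φ₁ ψ₁ φ₂ ψ₂, C (φ₁ + φ₂) (ψ₁ + ψ₂) ≤ C φ₁ ψ₁ + C φ₂ ψ₂) {u₁ u₂ : X}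
    (h₁ : HasNullDecompositions C u₁) (h₂ : HasNullDecompositions C u₂) :
    HasNullDecompositions C (u₁ + u₂) := by
  intro ε hε
  obtain ⟨φ₁, ψ₁, rfl, hlt₁⟩ := h₁ (ε / 2) (half_pos hε)
  obtain ⟨φ₂, ψ₂, rfl, hlt₂⟩ := h₂ (ε / 2) (half_pos hε)
  refine ⟨φ₁ + φ₂, ψ₁ + ψ₂, add_add_add_comm _ _ _ _, ?_⟩
  linarith [hadd φ₁ ψ₁ φ₂ ψ₂]

theorem HasNullDecompositions.smul_of_pos [Module ℝ X]
    (hsmul : ∀ c : ℝ, 0 ≤ c → ∀ φ ψ, C (c • φ) (c • ψ) = c * C φ ψ) {c : ℝ} (hc : 0 < c) {u : X}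
    (h : HasNullDecompositions C u) : HasNullDecompositions C (c • u) := by
  intro ε hε
  obtain ⟨φ, ψ, rfl, hlt⟩ := h (ε / c) (div_pos hε hc)
  refine ⟨c • φ, c • ψ, (smul_add c φ ψ).symm, ?_⟩
  calc C (c • φ) (c • ψ) = c * C φ ψ := hsmul c hc.le φ ψ
    _ < c * (ε / c) := by gcongr
    _ = ε := mul_div_cancel₀ ε hc.ne'

theorem HasNullDecompositions.neg (hswap : ∀ φ ψ, C (-ψ) (-φ) = C φ ψ) {u : X}
    (h : HasNullDecompositions C u) : HasNullDecompositions C (-u) := by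
  intro ε hε
  obtain ⟨φ, ψ, rfl, hlt⟩ := h ε hε
  exact ⟨-ψ, -φ, by abel, (hswap φ ψ).symm ▸ hlt⟩

def nullDecompositionSubmodule [Module ℝ X]
    (hadd : ∀ φ₁ ψ₁ φ₂ ψ₂, C (φ₁ + φ₂) (ψ₁ + ψ₂) ≤ C φ₁ ψ₁ + C φ₂ ψ₂)
    (hsmul : ∀ c : ℝ, 0 ≤ c → ∀ φ ψ, C (c • φ) (c • ψ) = c * C φ ψ)
    (hswap : ∀ φ ψ, C (-ψ) (-φ) = C φ ψ) : Submodule ℝ X where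
  carrier := {u | HasNullDecompositions C u}
  zero_mem' := .zero hsmul
  add_mem' := .add hadd
  smul_mem' c u h := by
    rcases lt_trichotomy c 0 with hc | rfl | hc
    · simpa using (h.smul_of_pos hsmul (neg_pos.2 hc)).neg hswap
    · simpa using HasNullDecompositions.zero hsmul
    · exact h.smul_of_pos hsmul hc

end InfimalDecomposition

section AbsHomogeneous

variable {X : Type*} [AddCommGroup X] [Module ℝ X]

def AbsHomogeneous (J : X → ℝ) : Prop :=
  ∀ (c : ℝ) (u : X), J (c • u) = |c| * J u

variable {J : X → ℝ}

theorem AbsHomogeneous.map_zero (hJ : AbsHomogeneous J) : J 0 = 0 := by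
  simpa using hJ 0 0

theorem AbsHomogeneous.map_neg (hJ : AbsHomogeneous J) (u : X) : J (-u) = J u := by
  simpa using hJ (-1) u

theorem AbsHomogeneous.map_smul_of_nonneg (hJ : AbsHomogeneous J) {c : ℝ} (hc : 0 ≤ c) (u : X) :
    J (c • u) = c * J u := by
  rw [hJ, abs_of_nonneg hc]

theorem AbsHomogeneous.add_le (hJ : AbsHomogeneous J) (hconv : ConvexOn ℝ Set.univ J) (a b : X) :
    J (a + b) ≤ J a + J b := by
  have hmid := hconv.2 (Set.mem_univ a) (Set.mem_univ b) (by norm_num : (0 : ℝ) ≤ 1 / 2)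
    (by norm_num : (0 : ℝ) ≤ 1 / 2) (by norm_num)
  rw [← smul_add, hJ.map_smul_of_nonneg (by norm_num)] at hmid
  simp only [smul_eq_mul] at hmid
  linarith

variable {F : Type*} [FunLike F X ℝ] [LinearMapClass F ℝ X ℝ] {p : F} {v : X}

theorem AbsHomogeneous.apply_self_eq_of_subgradient (hJ : AbsHomogeneous J)
    (hp : ∀ u, J v + p (u - v) ≤ J u) : p v = J v := by
  have h₀ := hp 0
  have h₂ := hp ((2 : ℝ) • v)
  rw [zero_sub, _root_.map_neg, hJ.map_zero] at h₀
  rw [two_smul, add_sub_cancel_right, ← two_smul ℝ v, hJ.map_smul_of_nonneg zero_le_two] at h₂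
  linarith

theorem AbsHomogeneous.apply_le_of_subgradient (hJ : AbsHomogeneous J)
    (hp : ∀ u, J v + p (u - v) ≤ J u) (u : X) : p u ≤ J u := by
  have h := hp u
  rw [map_sub, hJ.apply_self_eq_of_subgradient hp] at h
  linarith

/-- `D_J^p(φ, v) + D_J^{-p}(ψ, -v)` after the cancellation `⟨p, v⟩ = J v`. -/
def icbCost (J : X → ℝ) (p : F) (φ ψ : X) : ℝ :=
  (J φ - p φ) + (J ψ + p ψ)

theorem AbsHomogeneous.bregman_add_bregman_eq_icbCost (hJ : AbsHomogeneous J)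
    (hp : ∀ u, J v + p (u - v) ≤ J u) (φ ψ : X) :
    (J φ - J v - p (φ - v)) + (J ψ - J (-v) + p (ψ + v)) = icbCost J p φ ψ := by
  rw [map_sub, map_add, hJ.apply_self_eq_of_subgradient hp, hJ.map_neg, icbCost]
  ring

theorem AbsHomogeneous.icbCost_nonneg (hJ : AbsHomogeneous J) (hle : ∀ u, p u ≤ J u) (φ ψ : X) :
    0 ≤ icbCost J p φ ψ := by
  have hψ := hle (-ψ)
  rw [_root_.map_neg, hJ.map_neg] at hψ
  have hφ := hle φ
  rw [icbCost]
  linarith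

theorem AbsHomogeneous.icbCost_add_le (hJ : AbsHomogeneous J) (hconv : ConvexOn ℝ Set.univ J)
    (φ₁ ψ₁ φ₂ ψ₂ : X) :
    icbCost J p (φ₁ + φ₂) (ψ₁ + ψ₂) ≤ icbCost J p φ₁ ψ₁ + icbCost J p φ₂ ψ₂ := by
  simp only [icbCost, map_add]
  linarith [hJ.add_le hconv φ₁ φ₂, hJ.add_le hconv ψ₁ ψ₂]

theorem AbsHomogeneous.icbCost_smul_of_nonneg (hJ : AbsHomogeneous J) {c : ℝ} (hc : 0 ≤ c)
    (φ ψ : X) : icbCost J p (c • φ) (c • ψ) = c * icbCost J p φ ψ := by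
  simp only [icbCost, hJ.map_smul_of_nonneg hc, map_smul, smul_eq_mul]
  ring

theorem AbsHomogeneous.icbCost_neg_swap (hJ : AbsHomogeneous J) (φ ψ : X) :
    icbCost J p (-ψ) (-φ) = icbCost J p φ ψ := by
  simp only [icbCost, hJ.map_neg, _root_.map_neg]
  ring

end AbsHomogeneous

/-- For convex, absolutely one-homogeneous `J` and `p ∈ ∂J(v)`,
with `ICB_J^p(u,v) = inf_{φ+ψ=u} D_J^p(φ,v) + D_J^{-p}(ψ,-v)`, the set
`M^IC = {u | ICB_J^p(u,v) = 0}` is a nonempty linear subspace: it contains `0`,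
is closed under addition, and closed under scalar multiplication. -/
theorem icb_zero_set_linear_subspace
    {X : Type*} [NormedAddCommGroup X] [NormedSpace ℝ X]
    (J : X → ℝ) (hJconv : ConvexOn ℝ Set.univ J)
    (hJhom : ∀ (c : ℝ) (u : X), J (c • u) = |c| * J u)
    (v : X) (p : X →L[ℝ] ℝ)
    (hp : ∀ u : X, J v + p (u - v) ≤ J u)
    (ICB : X → ℝ)
    (hICB : ∀ u : X, ICB u = sInf {r : ℝ | ∃ φ ψ : X, φ + ψ = u ∧
      r = (J φ - J v - p (φ - v)) + (J ψ - J (-v) + p (ψ + v))}) :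
    ICB 0 = 0 ∧
    (∀ u₁ u₂ : X, ICB u₁ = 0 → ICB u₂ = 0 → ICB (u₁ + u₂) = 0) ∧
    (∀ (c : ℝ) (u : X), ICB u = 0 → ICB (c • u) = 0) := by
  have hJ : AbsHomogeneous J := hJhom
  let M : Submodule ℝ X := nullDecompositionSubmodule (hJ.icbCost_add_le (p := p) hJconv)
    (fun _ => hJ.icbCost_smul_of_nonneg) hJ.icbCost_neg_swap
  have hmem : ∀ u, ICB u = 0 ↔ u ∈ M := fun u => by
    simp only [hICB u, hJ.bregman_add_bregman_eq_icbCost hp]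
    exact sInf_decompositionCosts_eq_zero_iff _
      (hJ.icbCost_nonneg (hJ.apply_le_of_subgradient hp)) u
  simp only [hmem]
  exact ⟨M.zero_mem, fun _ _ => M.add_mem, fun c _ => M.smul_mem c⟩
end

section
/- Let J be convex and absolutely one-homogeneous on a Banach space X, v ∈ X, p ∈ ∂J(v). If D_J^p(u,v) = 0, then ICB_J^p(u,v) = 0, i.e. M^B ⊆ M^IC. -/
/-!
For absolutely one-homogeneous `J`, a subgradient `p` at `v` satisfies `J v = p v`, so
`D_J^p(·, v) = J - p` is positively one-homogeneous, and since `J` is even,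
`D_J^{-p}(-w, -v) = D_J^p(w, v)`. The splitting `u = 2u + (-u)` therefore costs
`3 D_J^p(u, v) = 0`, while every splitting costs at least `0` because `-p` is a subgradient
of `J` at `-v`.
-/

section

variable {X : Type*} [AddCommGroup X] [Module ℝ X]

def AbsOneHomogeneous (J : X → ℝ) : Prop :=
  ∀ (c : ℝ) (u : X), J (c • u) = |c| * J u

def IsSubgradient (J : X → ℝ) (v : X) (p : X →ₗ[ℝ] ℝ) : Prop :=
  ∀ u : X, J v + p (u - v) ≤ J u

/-- `bregmanDist J p v u` is `D_J^p(u, v)`. -/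
def bregmanDist (J : X → ℝ) (p : X →ₗ[ℝ] ℝ) (v u : X) : ℝ :=
  J u - J v - p (u - v)

namespace AbsOneHomogeneous

variable {J : X → ℝ} (hJ : AbsOneHomogeneous J)
include hJ

theorem map_zero : J 0 = 0 := by
  simpa using hJ 0 0

theorem map_neg (w : X) : J (-w) = J w := by
  simpa using hJ (-1) w

theorem map_smul_of_nonneg {c : ℝ} (hc : 0 ≤ c) (w : X) : J (c • w) = c * J w := by
  rw [hJ, abs_of_nonneg hc]

end AbsOneHomogeneous

theorem IsSubgradient.apply_eq {J : X → ℝ} (hJ : AbsOneHomogeneous J) {v : X}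
    {p : X →ₗ[ℝ] ℝ} (hp : IsSubgradient J v p) : J v = p v := by
  have h₀ := hp 0
  have h₂ := hp ((2 : ℝ) • v)
  rw [hJ.map_zero, zero_sub, map_neg] at h₀
  rw [hJ.map_smul_of_nonneg zero_le_two, two_smul, add_sub_cancel_right] at h₂
  linarith

theorem IsSubgradient.neg {J : X → ℝ} (hJ : ∀ w, J (-w) = J w) {v : X} {p : X →ₗ[ℝ] ℝ}
    (hp : IsSubgradient J v p) : IsSubgradient J (-v) (-p) := by
  intro u
  have := hp (-u)
  rw [hJ] at this
  rwa [hJ, LinearMap.neg_apply, sub_neg_eq_add, ← map_neg, neg_add']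

theorem bregmanDist_nonneg {J : X → ℝ} {v : X} {p : X →ₗ[ℝ] ℝ} (hp : IsSubgradient J v p)
    (u : X) : 0 ≤ bregmanDist J p v u :=
  sub_nonneg.2 (by linarith [hp u])

theorem bregmanDist_neg {J : X → ℝ} (hJ : ∀ w, J (-w) = J w) (p : X →ₗ[ℝ] ℝ)
    (v w : X) : bregmanDist J (-p) (-v) (-w) = bregmanDist J p v w := by
  simp only [bregmanDist, hJ, LinearMap.neg_apply, map_sub, map_neg]
  ring

theorem bregmanDist_smul_of_nonneg {J : X → ℝ} (hJ : AbsOneHomogeneous J) {v : X}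
    {p : X →ₗ[ℝ] ℝ} (hp : IsSubgradient J v p) {c : ℝ} (hc : 0 ≤ c) (u : X) :
    bregmanDist J p v (c • u) = c * bregmanDist J p v u := by
  simp only [bregmanDist, hJ.map_smul_of_nonneg hc, map_sub, map_smul, smul_eq_mul,
    hp.apply_eq hJ]
  ring

end

theorem bregman_zero_implies_icb_zero_general
    {X : Type*} [NormedAddCommGroup X] [NormedSpace ℝ X]
    (J : X → ℝ)
    (hJhom : ∀ (c : ℝ) (u : X), J (c • u) = |c| * J u)
    (v : X) (p : X →L[ℝ] ℝ)
    (hp : ∀ u : X, J v + p (u - v) ≤ J u)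
    (u : X) (hu : J u - J v - p (u - v) = 0) :
    sInf {r : ℝ | ∃ φ ψ : X, φ + ψ = u ∧
      r = (J φ - J v - p (φ - v)) + (J ψ - J (-v) + p (ψ + v))} = 0 := by
  have hJ : AbsOneHomogeneous J := hJhom
  have hp : IsSubgradient J v (p : X →ₗ[ℝ] ℝ) := hp
  have hu : bregmanDist J p v u = 0 := hu
  have hsplit : ∀ φ ψ : X, J φ - J v - p (φ - v) + (J ψ - J (-v) + p (ψ + v)) =
      bregmanDist J p v φ + bregmanDist J (-(p : X →ₗ[ℝ] ℝ)) (-v) ψ := fun φ ψ => by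
    simp only [bregmanDist, LinearMap.neg_apply, sub_neg_eq_add]; rfl
  simp only [hsplit]
  refine IsLeast.csInf_eq ⟨⟨(2 : ℝ) • u, -u, by rw [two_smul, add_neg_cancel_right], ?_⟩, ?_⟩
  · rw [bregmanDist_neg hJ.map_neg, bregmanDist_smul_of_nonneg hJ hp zero_le_two, hu,
      mul_zero, add_zero]
  · rintro r ⟨φ, ψ, -, rfl⟩
    exact add_nonneg (bregmanDist_nonneg hp φ) (bregmanDist_nonneg (hp.neg hJ.map_neg) ψ)

/-- For convex, absolutely one-homogeneous `J` and `p ∈ ∂J(v)`,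
if `D_J^p(u,v) = 0` then `ICB_J^p(u,v) = 0`, i.e. `M^B ⊆ M^IC`. -/
theorem bregman_zero_implies_icb_zero
    {X : Type*} [NormedAddCommGroup X] [NormedSpace ℝ X]
    (J : X → ℝ) (hJconv : ConvexOn ℝ Set.univ J)
    (hJhom : ∀ (c : ℝ) (u : X), J (c • u) = |c| * J u)
    (v : X) (p : X →L[ℝ] ℝ)
    (hp : ∀ u : X, J v + p (u - v) ≤ J u)
    (u : X) (hu : J u - J v - p (u - v) = 0) :
    sInf {r : ℝ | ∃ φ ψ : X, φ + ψ = u ∧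
      r = (J φ - J v - p (φ - v)) + (J ψ - J (-v) + p (ψ + v))} = 0 :=
  bregman_zero_implies_icb_zero_general J hJhom v p hp u hu
end

section
/- Let f ∈ ℓ², α > 0, and define the soft-thresholding operator (S_α f)_i = f_i - α·sign(f_i) if |f_i| ≥ α, and 0 if |f_i| < α. Then S_α f is the unique minimizer over u ∈ ℓ¹ of (1/2)‖u - f‖²_{ℓ²} + α‖u‖_{ℓ¹}. -/
/-!
Coordinatewise, `f i - S_α f i` is a subgradient of `α |·|` at `S_α f i`, so the scalar objective
`t ↦ ½ (t - f i)² + α |t|` exceeds its value at `S_α f i` by at least `½ (t - S_α f i)²`.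
Summing over `i` gives `J(u) ≥ J(S_α f) + ½ ‖u - S_α f‖²` for the objective `J`, which yields
minimality and uniqueness at once. Since `f i → 0`, `S_α f` is finitely supported, hence in `ℓ¹`.
-/

noncomputable def softThresh (α : ℝ) (f : ℕ → ℝ) : ℕ → ℝ :=
  fun i => if α ≤ |f i| then f i - α * Real.sign (f i) else 0

noncomputable def lassoObjective (α : ℝ) (f u : ℕ → ℝ) : ℝ :=
  (1/2) * (∑' i, (u i - f i)^2) + α * (∑' i, |u i|)

section Summability

variable {ι : Type*}

theorem Memℓp.summable_sq {g : ι → ℝ} (hg : Memℓp g 2) : Summable fun i => g i ^ 2 := by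
  simpa only [ENNReal.toReal_ofNat, Real.rpow_two, Real.norm_eq_abs, sq_abs] using
    hg.summable (by norm_num)

theorem Memℓp.summable_abs {g : ι → ℝ} (hg : Memℓp g 1) : Summable fun i => |g i| := by
  simpa only [ENNReal.toReal_one, Real.rpow_one, Real.norm_eq_abs] using hg.summable (by norm_num)

theorem Memℓp.summable_sub_sq {g h : ι → ℝ} (hg : Memℓp g 2) (hh : Memℓp h 2) :
    Summable fun i => (g i - h i) ^ 2 :=
  (hg.sub hh).summable_sq

theorem Memℓp.finite_setOf_le_abs {g : ι → ℝ} (hg : Memℓp g 2) {α : ℝ} (hα : 0 < α) :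
    {i | α ≤ |g i|}.Finite := by
  have hsmall : ∀ᶠ i in Filter.cofinite, g i ^ 2 < α ^ 2 :=
    hg.summable_sq.tendsto_cofinite_zero.eventually_lt_const (by positivity)
  refine (Filter.eventually_cofinite.mp hsmall).subset fun i hi => not_lt.mpr ?_
  simpa only [sq_abs] using pow_le_pow_left₀ hα.le hi 2

end Summability

variable {α : ℝ} {f u : ℕ → ℝ}

theorem memℓp_softThresh (hf : Memℓp f 2) (hα : 0 < α) : Memℓp (softThresh α f) 1 := by
  refine (memℓp_zero ((hf.finite_setOf_le_abs hα).subset fun i hi => ?_)).of_exponent_ge zero_le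
  by_contra hsmall
  exact hi (if_neg hsmall)

theorem softThresh_subgradient_s6 (hα : 0 ≤ α) (f : ℕ → ℝ) (i : ℕ) (t : ℝ) :
    (f i - softThresh α f i) * (t - softThresh α f i) + α * |softThresh α f i| ≤ α * |t| := by
  unfold softThresh
  split_ifs with hbig
  · rcases lt_trichotomy (f i) 0 with hneg | hzero | hpos
    · rw [abs_of_neg hneg] at hbig
      rw [Real.sign_of_neg hneg, abs_of_nonpos (by linarith)]
      linear_combination mul_le_mul_of_nonneg_left (neg_le_abs t) hα
    · rw [hzero, abs_zero] at hbig
      rw [le_antisymm hbig hα, hzero]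
      simp
    · rw [abs_of_pos hpos] at hbig
      rw [Real.sign_of_pos hpos, abs_of_nonneg (by linarith)]
      linear_combination mul_le_mul_of_nonneg_left (le_abs_self t) hα
  · calc (f i - 0) * (t - 0) + α * |(0 : ℝ)| = f i * t := by simp
      _ ≤ |f i| * |t| := by rw [← abs_mul]; exact le_abs_self _
      _ ≤ α * |t| := by gcongr; exact (not_le.mp hbig).le

theorem softThresh_add_sq_le (hα : 0 ≤ α) (f : ℕ → ℝ) (i : ℕ) (t : ℝ) :
    (1/2) * (softThresh α f i - f i)^2 + α * |softThresh α f i| + (1/2) * (t - softThresh α f i)^2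
      ≤ (1/2) * (t - f i)^2 + α * |t| := by
  linear_combination softThresh_subgradient_s6 hα f i t

theorem summable_lassoObjective_terms (hf : Memℓp f 2) (hu : Memℓp u 1) :
    Summable fun i => (1/2) * (u i - f i)^2 + α * |u i| :=
  (((hu.of_exponent_ge one_le_two).summable_sub_sq hf).mul_left _).add
    (hu.summable_abs.mul_left _)

theorem lassoObjective_eq_tsum (hf : Memℓp f 2) (hu : Memℓp u 1) :
    lassoObjective α f u = ∑' i, ((1/2) * (u i - f i)^2 + α * |u i|) := by
  rw [lassoObjective, ← tsum_mul_left, ← tsum_mul_left, Summable.tsum_add]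
  · exact ((hu.of_exponent_ge one_le_two).summable_sub_sq hf).mul_left _
  · exact hu.summable_abs.mul_left _

theorem lassoObjective_softThresh_add_le (hf : Memℓp f 2) (hα : 0 < α) (hu : Memℓp u 1) :
    lassoObjective α f (softThresh α f) + (1/2) * ∑' i, (u i - softThresh α f i)^2
      ≤ lassoObjective α f u := by
  have hS := memℓp_softThresh hf hα
  have hdist : Summable fun i => (1/2) * (u i - softThresh α f i)^2 :=
    ((hu.of_exponent_ge one_le_two).summable_sub_sq (hS.of_exponent_ge one_le_two)).mul_left _
  rw [lassoObjective_eq_tsum hf hS, lassoObjective_eq_tsum hf hu, ← tsum_mul_left,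
    ← (summable_lassoObjective_terms hf hS).tsum_add hdist]
  exact ((summable_lassoObjective_terms hf hS).add hdist).tsum_le_tsum
    (fun i => softThresh_add_sq_le hα.le f i (u i)) (summable_lassoObjective_terms hf hu)

theorem lassoObjective_softThresh_le (hf : Memℓp f 2) (hα : 0 < α) (hu : Memℓp u 1) :
    lassoObjective α f (softThresh α f) ≤ lassoObjective α f u :=
  (le_add_of_nonneg_right (by positivity)).trans (lassoObjective_softThresh_add_le hf hα hu)

theorem eq_softThresh_of_lassoObjective_le (hf : Memℓp f 2) (hα : 0 < α) (hu : Memℓp u 1)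
    (h : lassoObjective α f u ≤ lassoObjective α f (softThresh α f)) : u = softThresh α f := by
  have hdist : Summable fun i => (u i - softThresh α f i)^2 :=
    (hu.of_exponent_ge one_le_two).summable_sub_sq
      ((memℓp_softThresh hf hα).of_exponent_ge one_le_two)
  have hzero : ∑' i, (u i - softThresh α f i)^2 ≤ 0 := by
    linarith [lassoObjective_softThresh_add_le hf hα hu]
  funext i
  have hi : (u i - softThresh α f i)^2 ≤ 0 :=
    (hdist.le_tsum i fun j _ => sq_nonneg _).trans hzero
  exact sub_eq_zero.mp ((sq_nonpos_iff _).mp hi)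

/-- For `f ∈ ℓ²` and `α > 0`, the soft-thresholding `S_α f` belongs
to `ℓ¹` and is the unique minimizer over `u ∈ ℓ¹` of
`(1/2)‖u - f‖²_{ℓ²} + α‖u‖_{ℓ¹}`. -/
theorem softThresh_unique_minimizer
    (f : ℕ → ℝ) (hf : Memℓp f 2) (α : ℝ) (hα : 0 < α) :
    Memℓp (softThresh α f) 1 ∧
    (∀ u : ℕ → ℝ, Memℓp u 1 →
      (1/2) * (∑' i, (softThresh α f i - f i)^2) + α * (∑' i, |softThresh α f i|)
        ≤ (1/2) * (∑' i, (u i - f i)^2) + α * (∑' i, |u i|)) ∧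
    (∀ u : ℕ → ℝ, Memℓp u 1 →
      (1/2) * (∑' i, (u i - f i)^2) + α * (∑' i, |u i|)
        = (1/2) * (∑' i, (softThresh α f i - f i)^2) + α * (∑' i, |softThresh α f i|) →
      u = softThresh α f) :=
  ⟨memℓp_softThresh hf hα, fun _ hu => lassoObjective_softThresh_le hf hα hu,
    fun _ hu h => eq_softThresh_of_lassoObjective_le hf hα hu h.le⟩
end

section
/- Let f ∈ ℓ², α > 0, u_α the soft-thresholding of f at level α, and p_α = (f - u_α)/α. Then p_α ∈ ∂‖·‖_{ℓ¹}(u_α), with (p_α)_i = sign(f_i) if |f_i| ≥ α and (p_α)_i = f_i/α if |f_i| < α. -/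
/-! Soft thresholding moves `f i` towards `0` by `α` without crossing it: `f i - α sign (f i)` equals
`(|f i| - α) sign (f i)`, so on the support of `u_α` its sign is that of `f i`. Hence
`f - u_α` is `α sign f` where `|f| ≥ α` and `f` elsewhere, and dividing by `α` gives a vector
bounded by `1` that agrees with `sign u_α` on the support of `u_α`. -/

namespace Real

theorem abs_sign_le_one (x : ℝ) : |sign x| ≤ 1 := by
  rcases sign_apply_eq x with h | h | h <;> simp [h]

theorem sign_sign (x : ℝ) : sign (sign x) = sign x := by
  rcases sign_apply_eq x with h | h | h <;> simp [h, sign_neg, sign_one, sign_zero]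

theorem sign_mul_of_pos {c : ℝ} (hc : 0 < c) (y : ℝ) : sign (c * y) = sign y := by
  rcases lt_trichotomy y 0 with hy | rfl | hy
  · rw [sign_of_neg (mul_neg_of_pos_of_neg hc hy), sign_of_neg hy]
  · rw [mul_zero]
  · rw [sign_of_pos (mul_pos hc hy), sign_of_pos hy]

theorem sub_mul_sign_eq (α x : ℝ) : x - α * sign x = (|x| - α) * sign x := by
  rcases lt_trichotomy x 0 with hx | rfl | hx
  · rw [sign_of_neg hx, abs_of_neg hx]; ring
  · simp [sign_zero]
  · rw [sign_of_pos hx, abs_of_pos hx]; ring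

end Real

section softThresh

variable {α : ℝ} {f : ℕ → ℝ} {i : ℕ}

theorem le_abs_of_softThresh_ne_zero (h : softThresh α f i ≠ 0) : α ≤ |f i| := by
  by_contra hlt
  exact h (if_neg hlt)

theorem sub_softThresh_apply :
    f i - softThresh α f i = if α ≤ |f i| then α * Real.sign (f i) else f i := by
  unfold softThresh
  split_ifs <;> ring

theorem sign_softThresh_of_ne_zero (h : softThresh α f i ≠ 0) :
    Real.sign (softThresh α f i) = Real.sign (f i) := by
  have hle := le_abs_of_softThresh_ne_zero h
  have hu : softThresh α f i = (|f i| - α) * Real.sign (f i) := by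
    rw [softThresh, if_pos hle, Real.sub_mul_sign_eq]
  rw [hu] at h ⊢
  have hpos : 0 < |f i| - α := (sub_nonneg.2 hle).lt_of_ne' (left_ne_zero_of_mul h)
  rw [Real.sign_mul_of_pos hpos, Real.sign_sign]

end softThresh

theorem softThresh_subgradient_general
    (f : ℕ → ℝ) (α : ℝ) (hα : 0 < α)
    (p : ℕ → ℝ) (hp : ∀ i, p i = (f i - softThresh α f i) / α) :
    (∀ i, p i = if α ≤ |f i| then Real.sign (f i) else f i / α) ∧
    (∀ i, |p i| ≤ 1) ∧
    (∀ i, softThresh α f i ≠ 0 → p i = Real.sign (softThresh α f i)) := by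
  have hformula : ∀ i, p i = if α ≤ |f i| then Real.sign (f i) else f i / α := by
    intro i
    rw [hp, sub_softThresh_apply]
    split_ifs
    · field_simp
    · rfl
  refine ⟨hformula, fun i => ?_, fun i hi => ?_⟩
  · rw [hformula]
    split_ifs with h
    · exact Real.abs_sign_le_one _
    · rw [abs_div, abs_of_pos hα, div_le_one hα]
      exact (not_le.1 h).le
  · rw [sign_softThresh_of_ne_zero hi, hformula, if_pos (le_abs_of_softThresh_ne_zero hi)]

/-- For `f ∈ ℓ²`, `α > 0`, `u_α = S_α f` the soft-thresholding and
`p_α = (f - u_α)/α`, we have the componentwise formula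
`(p_α)_i = sign(f_i)` if `|f_i| ≥ α`, `(p_α)_i = f_i/α` otherwise, and
`p_α ∈ ∂‖·‖_{ℓ¹}(u_α)`: `‖p_α‖_∞ ≤ 1` and `(p_α)_i = sign((u_α)_i)` on the
support of `u_α`. -/
theorem softThresh_subgradient
    (f : ℕ → ℝ) (hf : Memℓp f 2) (α : ℝ) (hα : 0 < α)
    (p : ℕ → ℝ) (hp : ∀ i, p i = (f i - softThresh α f i) / α) :
    (∀ i, p i = if α ≤ |f i| then Real.sign (f i) else f i / α) ∧
    (∀ i, |p i| ≤ 1) ∧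
    (∀ i, softThresh α f i ≠ 0 → p i = Real.sign (softThresh α f i)) :=
  softThresh_subgradient_general f α hα p hp
end

section
/- Let f ∈ ℓ², α > 0, u_α the soft-thresholding of f, and p_α = (f - u_α)/α its ℓ¹-subgradient. Then for u ∈ ℓ¹, the Bregman distance D_{ℓ¹}^{p_α}(u, u_α) = ‖u‖_{ℓ¹} - ⟨p_α, u⟩ vanishes if and only if, for every index i, either (|f_i| ≥ α and u_i = λ sign(f_i) for some λ ≥ 0) or (|f_i| < α and u_i = 0). -/
/-!
On `ℓ¹`, the Bregman distance `‖u‖₁ - ⟨p, u⟩` for a subgradient `p` with `‖p‖_∞ ≤ 1` is the sum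
of the nonnegative terms `|uᵢ| - pᵢ uᵢ`, so it vanishes iff every term does. For the
soft-thresholding subgradient, `pᵢ = sign fᵢ` where `|fᵢ| ≥ α`, and then `|uᵢ| = pᵢ uᵢ` says that
`uᵢ` is a nonnegative multiple of `sign fᵢ`; elsewhere `|pᵢ| < 1`, which forces `uᵢ = 0`.
-/

lemma mul_le_abs_of_abs_le_one {p : ℝ} (hp : |p| ≤ 1) (u : ℝ) : p * u ≤ |u| :=
  calc p * u ≤ |p| * |u| := (le_abs_self _).trans (abs_mul p u).le
    _ ≤ |u| := mul_le_of_le_one_left (abs_nonneg u) hp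

lemma abs_eq_mul_iff_of_abs_lt_one {p : ℝ} (hp : |p| < 1) (u : ℝ) : |u| = p * u ↔ u = 0 := by
  refine ⟨fun h => ?_, fun h => by simp [h]⟩
  by_contra hu
  have : p * u < |u| :=
    calc p * u ≤ |p| * |u| := (le_abs_self _).trans (abs_mul p u).le
      _ < |u| := mul_lt_of_lt_one_left (abs_pos.2 hu) hp
  exact this.ne' h

lemma abs_eq_sign_mul_iff {a : ℝ} (ha : a ≠ 0) (u : ℝ) :
    |u| = Real.sign a * u ↔ ∃ l : ℝ, 0 ≤ l ∧ u = l * Real.sign a := by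
  rcases Real.sign_apply_eq_of_ne_zero a ha with hs | hs <;> rw [hs]
  · simp only [neg_one_mul, abs_eq_neg_self, mul_neg, mul_one]
    exact ⟨fun h => ⟨-u, neg_nonneg.2 h, (neg_neg u).symm⟩, fun ⟨l, hl, h⟩ => h ▸ neg_nonpos.2 hl⟩
  · simp only [one_mul, abs_eq_self, mul_one]
    exact ⟨fun h => ⟨u, h, rfl⟩, fun ⟨l, hl, h⟩ => h ▸ hl⟩

theorem tsum_abs_sub_tsum_mul_eq_zero_iff {ι : Type*} {u p : ι → ℝ}
    (hu : Summable fun i => |u i|) (hp : ∀ i, |p i| ≤ 1) :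
    (∑' i, |u i|) - ∑' i, p i * u i = 0 ↔ ∀ i, |u i| = p i * u i := by
  have hpu : Summable fun i => p i * u i :=
    hu.of_norm_bounded fun i => by
      rw [Real.norm_eq_abs, abs_mul]; exact mul_le_of_le_one_left (abs_nonneg _) (hp i)
  have hterm : ∀ i, 0 ≤ |u i| - p i * u i := fun i => sub_nonneg.2 (mul_le_abs_of_abs_le_one (hp i) _)
  rw [← hu.tsum_sub hpu, ← (hu.sub hpu).hasSum_iff, hasSum_zero_iff_of_nonneg hterm, funext_iff]
  simp only [Pi.zero_apply, sub_eq_zero]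

section softThresh

variable {α : ℝ} {f : ℕ → ℝ} {i : ℕ}

lemma sub_softThresh_div_of_le (hα : α ≠ 0) (h : α ≤ |f i|) :
    (f i - softThresh α f i) / α = Real.sign (f i) := by
  rw [softThresh, if_pos h, sub_sub_cancel, mul_div_cancel_left₀ _ hα]

lemma sub_softThresh_div_of_lt (h : |f i| < α) : (f i - softThresh α f i) / α = f i / α := by
  rw [softThresh, if_neg h.not_ge, sub_zero]

lemma abs_sub_softThresh_div_lt_one (hα : 0 < α) (h : |f i| < α) :
    |(f i - softThresh α f i) / α| < 1 := by
  rw [sub_softThresh_div_of_lt h, abs_div, abs_of_pos hα]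
  exact (div_lt_one hα).2 h

lemma abs_sub_softThresh_div_le_one (hα : 0 < α) (f : ℕ → ℝ) (i : ℕ) :
    |(f i - softThresh α f i) / α| ≤ 1 := by
  rcases le_or_gt α |f i| with h | h
  · rw [sub_softThresh_div_of_le hα.ne' h]
    rcases Real.sign_apply_eq (f i) with hs | hs | hs <;> simp [hs]
  · exact (abs_sub_softThresh_div_lt_one hα h).le

end softThresh

theorem softThresh_bregman_zero_iff_general
    (f : ℕ → ℝ) (α : ℝ) (hα : 0 < α)
    (p : ℕ → ℝ) (hp : ∀ i, p i = (f i - softThresh α f i) / α)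
    (u : ℕ → ℝ) (hu : Memℓp u 1) :
    ((∑' i, |u i|) - (∑' i, p i * u i) = 0 ↔
      ∀ i, (α ≤ |f i| ∧ ∃ l : ℝ, 0 ≤ l ∧ u i = l * Real.sign (f i)) ∨
        (|f i| < α ∧ u i = 0)) := by
  have hu_abs : Summable fun i => |u i| := by simpa using hu.summable (by norm_num)
  have hp_abs : ∀ i, |p i| ≤ 1 := fun i => hp i ▸ abs_sub_softThresh_div_le_one hα f i
  rw [tsum_abs_sub_tsum_mul_eq_zero_iff hu_abs hp_abs]
  refine forall_congr' fun i => ?_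
  rcases le_or_gt α |f i| with h | h
  · have hf : f i ≠ 0 := abs_pos.1 (hα.trans_le h)
    rw [hp i, sub_softThresh_div_of_le hα.ne' h, abs_eq_sign_mul_iff hf]
    simp [h, h.not_gt]
  · rw [hp i, abs_eq_mul_iff_of_abs_lt_one (abs_sub_softThresh_div_lt_one hα h)]
    simp [h, h.not_ge]

/-- For `f ∈ ℓ²`, `α > 0`, `u_α` the soft-thresholding of `f` and
`p_α = (f - u_α)/α` its `ℓ¹`-subgradient, the Bregman distance
`D_{ℓ¹}^{p_α}(u, u_α) = ‖u‖_{ℓ¹} - ⟨p_α, u⟩` vanishes for `u ∈ ℓ¹` if and only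
if for every index `i` either (`|f_i| ≥ α` and `u_i = λ sign(f_i)` for some
`λ ≥ 0`) or (`|f_i| < α` and `u_i = 0`). -/
theorem softThresh_bregman_zero_iff
    (f : ℕ → ℝ) (hf : Memℓp f 2) (α : ℝ) (hα : 0 < α)
    (p : ℕ → ℝ) (hp : ∀ i, p i = (f i - softThresh α f i) / α)
    (u : ℕ → ℝ) (hu : Memℓp u 1) :
    ((∑' i, |u i|) - (∑' i, p i * u i) = 0 ↔
      ∀ i, (α ≤ |f i| ∧ ∃ l : ℝ, 0 ≤ l ∧ u i = l * Real.sign (f i)) ∨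
        (|f i| < α ∧ u i = 0)) :=
  softThresh_bregman_zero_iff_general f α hα p hp u hu
end

section
/- Let p ∈ ℓ^∞ with ‖p‖_∞ ≤ 1 and let v ∈ ℓ¹ with p ∈ ∂‖·‖_{ℓ¹}(v). Then for u ∈ ℓ¹, the infimal convolution of the two Bregman distances satisfies [D_{ℓ¹}^p(·,v) □ D_{ℓ¹}^{-p}(·,-v)](u) = Σ_i (1 - |p_i|)|u_i|. -/
/-!
Coordinatewise, with `c = p i`, `a = u i` and `b = z i`, the summand is
`(|a - b| - c (a - b)) + (|b| + c b) ≥ (1 - |c|) (|a - b| + |b|) ≥ (1 - |c|) |a|`,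
and equality holds for `b = a` when `c a < 0` and for `b = 0` otherwise. Since `|z i| ≤ |u i|`,
this coordinatewise minimiser lies in `ℓ¹`, so the infimum is attained.
-/

/-- The Bregman distance `D^c(x, y) = |x| - c x` of `|·|` on `ℝ`, for any `y` with
`c ∈ ∂|·|(y)`. -/
def absBregman (c x : ℝ) : ℝ := |x| - c * x

theorem one_sub_abs_mul_abs_le_absBregman_add {c : ℝ} (hc : |c| ≤ 1) (a b : ℝ) :
    (1 - |c|) * |a| ≤ absBregman c (a - b) + absBregman (-c) b := by
  have h₁ : c * (a - b) ≤ |c| * |a - b| := (le_abs_self _).trans (abs_mul _ _).le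
  have h₂ : -(|c| * |b|) ≤ c * b := by simpa only [abs_mul] using neg_abs_le (c * b)
  have h₃ : |a| - |b| ≤ |a - b| := abs_sub_abs_le_abs_sub a b
  unfold absBregman
  nlinarith [abs_nonneg (a - b), abs_nonneg b]

theorem one_sub_abs_mul_abs_eq_absBregman_add (c a : ℝ) :
    (1 - |c|) * |a| =
      absBregman c (a - if c * a < 0 then a else 0) +
        absBregman (-c) (if c * a < 0 then a else 0) := by
  unfold absBregman
  split_ifs with h
  · have hca : c * a = -(|c| * |a|) := by rw [← abs_mul, abs_of_neg h, neg_neg]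
    simp only [sub_self, abs_zero, mul_zero]
    linarith
  · have hca : c * a = |c| * |a| := by rw [← abs_mul, abs_of_nonneg (not_lt.mp h)]
    simp only [sub_zero, abs_zero, mul_zero]
    linarith

theorem Memℓp.mul_of_abs_le_one {α : Type*} {q : ENNReal} {c w : α → ℝ}
    (hc : ∀ i, |c i| ≤ 1) (hw : Memℓp w q) : Memℓp (fun i => c i * w i) q :=
  hw.mono' fun i => by
    simpa only [Real.norm_eq_abs, abs_mul] using mul_le_of_le_one_left (abs_nonneg _) (hc i)

theorem hasSum_absBregman_add_absBregman {α : Type*} {p u z : α → ℝ} (hp : ∀ i, |p i| ≤ 1)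
    (hu : Memℓp u 1) (hz : Memℓp z 1) :
    HasSum (fun i => absBregman (p i) (u i - z i) + absBregman (-p i) (z i))
      (((∑' i, |u i - z i|) - (∑' i, p i * (u i - z i)))
        + ((∑' i, |z i|) + (∑' i, p i * z i))) := by
  have huz : Memℓp (u - z) 1 := hu.sub hz
  have h₁ : HasSum (fun i => |u i - z i|) (∑' i, |u i - z i|) := huz.summable_of_one.abs.hasSum
  have h₂ : HasSum (fun i => p i * (u i - z i)) (∑' i, p i * (u i - z i)) :=
    (huz.mul_of_abs_le_one hp).summable_of_one.hasSum
  have h₃ : HasSum (fun i => |z i|) (∑' i, |z i|) := hz.summable_of_one.abs.hasSum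
  have h₄ : HasSum (fun i => p i * z i) (∑' i, p i * z i) :=
    (hz.mul_of_abs_le_one hp).summable_of_one.hasSum
  simpa only [absBregman, neg_mul, sub_neg_eq_add] using (h₁.sub h₂).add (h₃.add h₄)

theorem icb_l1_formula_general
    (p : ℕ → ℝ) (hp : ∀ i, |p i| ≤ 1)
    (u : ℕ → ℝ) (hu : Memℓp u 1) :
    sInf {r : ℝ | ∃ z : ℕ → ℝ, Memℓp z 1 ∧
        r = ((∑' i, |u i - z i|) - (∑' i, p i * (u i - z i)))
          + ((∑' i, |z i|) + (∑' i, p i * z i))}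
      = ∑' i, (1 - |p i|) * |u i| := by
  set z : ℕ → ℝ := fun i => if p i * u i < 0 then u i else 0
  have hz : Memℓp z 1 := hu.mono' fun i => by
    simp only [z]
    split_ifs <;> simp
  have hz_min : (fun i => absBregman (p i) (u i - z i) + absBregman (-p i) (z i))
      = fun i => (1 - |p i|) * |u i| :=
    funext fun i => (one_sub_abs_mul_abs_eq_absBregman_add (p i) (u i)).symm
  have hsum_z := hz_min ▸ hasSum_absBregman_add_absBregman hp hu hz
  refine IsLeast.csInf_eq ⟨⟨z, hz, hsum_z.tsum_eq⟩, ?_⟩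
  rintro _ ⟨w, hw, rfl⟩
  rw [hsum_z.tsum_eq]
  exact hasSum_le (fun i => one_sub_abs_mul_abs_le_absBregman_add (hp i) (u i) (w i)) hsum_z
    (hasSum_absBregman_add_absBregman hp hu hw)

/-- For `p ∈ ℓ^∞` with `‖p‖_∞ ≤ 1`, `v ∈ ℓ¹` with
`p ∈ ∂‖·‖_{ℓ¹}(v)`, and `u ∈ ℓ¹`, the infimal convolution of the two
`ℓ¹`-Bregman distances satisfies
`[D_{ℓ¹}^p(·,v) □ D_{ℓ¹}^{-p}(·,-v)](u) = Σ_i (1 - |p_i|)|u_i|`. -/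
theorem icb_l1_formula
    (p : ℕ → ℝ) (hp : ∀ i, |p i| ≤ 1)
    (v : ℕ → ℝ) (hv : Memℓp v 1)
    (hpv : ∀ i, v i ≠ 0 → p i = Real.sign (v i))
    (u : ℕ → ℝ) (hu : Memℓp u 1) :
    sInf {r : ℝ | ∃ z : ℕ → ℝ, Memℓp z 1 ∧
        r = ((∑' i, |u i - z i|) - (∑' i, p i * (u i - z i)))
          + ((∑' i, |z i|) + (∑' i, p i * z i))}
      = ∑' i, (1 - |p i|) * |u i| :=
  icb_l1_formula_general p hp u hu
end

section
/- Let p ∈ ℝ^m with |p| ≤ 1 (Euclidean norm) and u ∈ ℝ^m, and let φ denote the angle between u and p (with φ := 0 if u = 0 or p = 0). Then the pointwise infimal convolution inf_{z ∈ ℝ^m} (|u - z| - p·(u - z)) + (|z| + p·z) equals |u|(1 - |cos φ||p|) if |p| < |cos φ|, and equals |u||sin φ|√(1 - |p|²) if |p| ≥ |cos φ|. -/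
/-!
The infimum is a convex program whose dual is to maximise `⟪y, u⟫` over `‖y + p‖ ≤ 1`,
`‖y - p‖ ≤ 1`; weak duality follows from Cauchy–Schwarz applied to both terms. In each regime we
exhibit a primal `z` and a dual `y` with equal values. Swapping `z ↦ u - z` exchanges `p` and `-p`,
so we may take `cos φ ≥ 0`. If `|p| < cos φ`, then `z = 0` is optimal with dual `u/|u| - p`.
Otherwise `u` splits as `α y + β p` with `y ⊥ p` and `|y ± p| = 1`, and `z` is the part of `u`
along `y - p`. At `|p| = 1` the infimum `0` is not attained; it is approached along `z = -s p` as
`s → ∞`.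
-/

open RealInnerProductSpace

variable {E : Type*} [NormedAddCommGroup E] [InnerProductSpace ℝ E]

/-- `D^p(u - z) + D^{-p}(z)`, where `D^p(v) = ‖v‖ - ⟪p, v⟫` is the isotropic ℓ¹-Bregman distance. -/
def icbObjective (p u z : E) : ℝ := (‖u - z‖ - ⟪p, u - z⟫) + (‖z‖ + ⟪p, z⟫)

lemma inner_le_icbObjective {p u y : E} (hadd : ‖y + p‖ ≤ 1) (hsub : ‖y - p‖ ≤ 1) (z : E) :
    ⟪y, u⟫ ≤ icbObjective p u z := by
  have hA : ⟪y + p, u - z⟫ ≤ ‖u - z‖ :=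
    (real_inner_le_norm _ _).trans (mul_le_of_le_one_left (norm_nonneg _) hadd)
  have hB : ⟪y - p, z⟫ ≤ ‖z‖ :=
    (real_inner_le_norm _ _).trans (mul_le_of_le_one_left (norm_nonneg _) hsub)
  have hsplit : ⟪y, u⟫ = (⟪y + p, u - z⟫ - ⟪p, u - z⟫) + (⟪y - p, z⟫ + ⟪p, z⟫) := by
    simp only [inner_add_left, inner_sub_left, inner_sub_right]
    ring
  unfold icbObjective
  linarith

lemma icbObjective_nonneg {p : E} (hp : ‖p‖ ≤ 1) (u z : E) : 0 ≤ icbObjective p u z := by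
  simpa using inner_le_icbObjective (u := u) (y := 0) (by simpa using hp) (by simpa using hp) z

lemma iInf_icbObjective_eq_of_certificate {p u : E} {V : ℝ} (y z : E) (hadd : ‖y + p‖ ≤ 1)
    (hsub : ‖y - p‖ ≤ 1) (hy : ⟪y, u⟫ = V) (hz : icbObjective p u z = V) :
    ⨅ z, icbObjective p u z = V := by
  have hV : ∀ z, V ≤ icbObjective p u z := hy ▸ inner_le_icbObjective hadd hsub
  exact le_antisymm (hz ▸ ciInf_le ⟨V, Set.forall_mem_range.2 hV⟩ z) (le_ciInf hV)

lemma icbObjective_neg_sub (p u z : E) : icbObjective (-p) u (u - z) = icbObjective p u z := by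
  simp only [icbObjective, sub_sub_cancel, inner_neg_left]
  ring

lemma iInf_icbObjective_neg (p u : E) :
    ⨅ z, icbObjective (-p) u z = ⨅ z, icbObjective p u z := by
  simp only [← icbObjective_neg_sub p u]
  exact ((Equiv.subLeft u).surjective.iInf_comp _).symm

lemma iInf_icbObjective_zero_left {p : E} (hp : ‖p‖ ≤ 1) : ⨅ z, icbObjective p 0 z = 0 :=
  iInf_icbObjective_eq_of_certificate 0 0 (by simpa) (by simpa) (inner_zero_left _)
    (by simp [icbObjective])

lemma iInf_icbObjective_smul_add_smul {p y : E} {α β : ℝ} (hyp : ⟪y, p⟫ = 0)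
    (hy : ‖y‖ ^ 2 + ‖p‖ ^ 2 = 1) (hβ : |β| ≤ α) :
    ⨅ z, icbObjective p (α • y + β • p) z = α * (1 - ‖p‖ ^ 2) := by
  have hpy : ⟪p, y⟫ = 0 := by rwa [real_inner_comm]
  have hadd : ‖y + p‖ = 1 := (pow_eq_one_iff_of_nonneg (norm_nonneg _) two_ne_zero).1 <| by
    rw [norm_add_sq_real, hyp]; linarith
  have hsub : ‖y - p‖ = 1 := (pow_eq_one_iff_of_nonneg (norm_nonneg _) two_ne_zero).1 <| by
    rw [norm_sub_sq_real, hyp]; linarith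
  obtain ⟨hβl, hβr⟩ := abs_le.1 hβ
  set s := (α + β) / 2
  set t := (α - β) / 2
  have hu : α • y + β • p - t • (y - p) = s • (y + p) := by
    simp only [s, t]
    module
  refine iInf_icbObjective_eq_of_certificate y (t • (y - p)) hadd.le hsub.le ?_ ?_
  · rw [inner_add_right, real_inner_smul_right, real_inner_smul_right, real_inner_self_eq_norm_sq,
      hyp]
    linear_combination α * hy
  · rw [icbObjective, hu, norm_smul, norm_smul, real_inner_smul_right, real_inner_smul_right,
      inner_add_right, inner_sub_right, hpy, real_inner_self_eq_norm_sq, hadd, hsub,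
      Real.norm_of_nonneg (by simp only [s]; linarith),
      Real.norm_of_nonneg (by simp only [t]; linarith)]
    simp only [s, t]
    ring

lemma iInf_icbObjective_of_norm_le {p u : E} {c : ℝ} (hu : u ≠ 0)
    (hc : ⟪u, p⟫ = ‖u‖ * ‖p‖ * c) (hpc : ‖p‖ ≤ c) :
    ⨅ z, icbObjective p u z = ‖u‖ * (1 - c * ‖p‖) := by
  have hU : ‖u‖ ≠ 0 := norm_ne_zero_iff.2 hu
  have hpu : ⟪p, u⟫ = ‖u‖ * ‖p‖ * c := by rwa [real_inner_comm]
  have hunit : ‖‖u‖⁻¹ • u‖ = 1 := norm_smul_inv_norm hu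
  refine iInf_icbObjective_eq_of_certificate (‖u‖⁻¹ • u - p) 0 (by simp [hunit]) ?_ ?_ ?_
  · have hsq : ‖‖u‖⁻¹ • u - p - p‖ ^ 2 = 1 - 4 * ‖p‖ * (c - ‖p‖) := by
      rw [sub_sub, ← two_smul ℝ p, norm_sub_sq_real, hunit, real_inner_smul_left,
        real_inner_smul_right, hc, norm_smul, Real.norm_two]
      field_simp
      ring
    nlinarith [norm_nonneg (‖u‖⁻¹ • u - p - p), norm_nonneg p]
  · rw [inner_sub_left, real_inner_smul_left, real_inner_self_eq_norm_sq, hpu]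
    field_simp
  · simp [icbObjective, hpu]
    ring

lemma exists_icbObjective_lt {p : E} (hp : ‖p‖ = 1) (u : E) {w : ℝ} (hw : 0 < w) :
    ∃ z, icbObjective p u z < w := by
  set a := ⟪p, u⟫
  set T := |a| + ‖u‖ ^ 2 / (2 * w)
  have hT : 0 ≤ T - a ∧ 0 ≤ T := by
    have : 0 ≤ ‖u‖ ^ 2 / (2 * w) := by positivity
    constructor <;> linarith [le_abs_self a, abs_nonneg a]
  refine ⟨(a - T) • p, ?_⟩
  have hinner : ⟪p, u - (a - T) • p⟫ = T := by
    rw [inner_sub_right, real_inner_smul_right, real_inner_self_eq_norm_sq, hp]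
    ring
  have hzero : ‖(a - T) • p‖ + ⟪p, (a - T) • p⟫ = 0 := by
    rw [norm_smul, real_inner_smul_right, real_inner_self_eq_norm_sq, hp, Real.norm_eq_abs,
      abs_of_nonpos (by linarith [hT.1])]
    ring
  have hsq : ‖u - (a - T) • p‖ ^ 2 = ‖u‖ ^ 2 - a ^ 2 + T ^ 2 := by
    rw [norm_sub_sq_real, real_inner_smul_right, norm_smul, Real.norm_eq_abs, hp, mul_one, sq_abs,
      real_inner_comm]
    ring
  have hTw : ‖u‖ ^ 2 ≤ 2 * T * w := by
    have : 2 * (‖u‖ ^ 2 / (2 * w)) * w = ‖u‖ ^ 2 := by field_simp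
    nlinarith [abs_nonneg a]
  have hlt : ‖u - (a - T) • p‖ < T + w := by
    refine abs_lt_of_sq_lt_sq' ?_ (by linarith [hT.2]) |>.2
    nlinarith [sq_nonneg a]
  rw [icbObjective, hinner, hzero]
  linarith

lemma iInf_icbObjective_of_norm_eq_one {p : E} (hp : ‖p‖ = 1) (u : E) :
    ⨅ z, icbObjective p u z = 0 :=
  ciInf_eq_of_forall_ge_of_forall_gt_exists_lt (icbObjective_nonneg hp.le u)
    fun _ hw ↦ exists_icbObjective_lt hp u hw

lemma iInf_icbObjective_of_abs_le {p u : E} {c : ℝ} (hu : u ≠ 0)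
    (hc : ⟪u, p⟫ = ‖u‖ * ‖p‖ * c) (hcp : |c| ≤ ‖p‖) (hp : ‖p‖ < 1) :
    ⨅ z, icbObjective p u z = ‖u‖ * √(1 - c ^ 2) * √(1 - ‖p‖ ^ 2) := by
  have hU : 0 < ‖u‖ := norm_pos_iff.2 hu
  have hc2 : c ^ 2 ≤ ‖p‖ ^ 2 := sq_le_sq' (abs_le.1 hcp).1 (abs_le.1 hcp).2
  have hr2 : ‖p‖ ^ 2 < 1 := by nlinarith [norm_nonneg p]
  set K := √(1 - c ^ 2)
  set S := √(1 - ‖p‖ ^ 2)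
  have hK2 : K ^ 2 = 1 - c ^ 2 := Real.sq_sqrt (by linarith)
  have hS2 : S ^ 2 = 1 - ‖p‖ ^ 2 := Real.sq_sqrt (by linarith)
  have hS : 0 < S := Real.sqrt_pos.2 (by linarith)
  have hSK : S ≤ K := Real.sqrt_le_sqrt (by linarith)
  have hK : 0 < K := hS.trans_le hSK
  set β := ‖u‖ * c / ‖p‖
  set α := ‖u‖ * K / S
  have hα : 0 < α := div_pos (mul_pos hU hK) hS
  have hβp : β * ‖p‖ = ‖u‖ * c := by
    rcases (norm_nonneg p).eq_or_lt with hp0 | hp0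
    · have : c = 0 := abs_nonpos_iff.1 (hp0 ▸ hcp)
      simp [β, ← hp0, this]
    · exact div_mul_cancel₀ _ hp0.ne'
  have hβα : |β| ≤ α := calc
    |β| ≤ ‖u‖ := by
      rw [abs_div, abs_mul, abs_norm, abs_norm]
      exact div_le_of_le_mul₀ (norm_nonneg p) hU.le (mul_le_mul_of_nonneg_left hcp hU.le)
    _ ≤ α := by rw [le_div_iff₀ hS]; exact mul_le_mul_of_nonneg_left hSK hU.le
  set y := α⁻¹ • (u - β • p)
  have hdecomp : α • y + β • p = u := by simp [y, smul_inv_smul₀ hα.ne']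
  have hyp : ⟪y, p⟫ = 0 := by
    rw [real_inner_smul_left, inner_sub_left, real_inner_smul_left, real_inner_self_eq_norm_sq, hc]
    linear_combination (-α⁻¹ * ‖p‖) * hβp
  have hy : ‖y‖ ^ 2 + ‖p‖ ^ 2 = 1 := by
    have hsq : ‖u - β • p‖ ^ 2 = (‖u‖ * K) ^ 2 := by
      rw [norm_sub_sq_real, real_inner_smul_right, hc, norm_smul, Real.norm_eq_abs, mul_pow,
        sq_abs, mul_pow, hK2]
      linear_combination (β * ‖p‖ - 2 * ‖u‖ * c + ‖u‖ * c) * hβp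
    have hyS : ‖y‖ = S := by
      rw [norm_smul, ← Real.sqrt_sq (norm_nonneg (u - β • p)), hsq,
        Real.sqrt_sq (mul_pos hU hK).le, norm_inv, Real.norm_of_nonneg hα.le]
      simp only [α]
      field_simp [hK.ne']
    rw [hyS, hS2]
    ring
  have := iInf_icbObjective_smul_add_smul hyp hy hβα
  rw [hdecomp] at this
  rw [this, ← hS2]
  simp only [α]
  field_simp

theorem iInf_icbObjective {p u : E} {c : ℝ} (hp : ‖p‖ ≤ 1) (hc : ⟪u, p⟫ = ‖u‖ * ‖p‖ * c) :
    ⨅ z, icbObjective p u z = if ‖p‖ < |c| then ‖u‖ * (1 - |c| * ‖p‖)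
      else ‖u‖ * √(1 - c ^ 2) * √(1 - ‖p‖ ^ 2) := by
  wlog hc0 : 0 ≤ c generalizing p c
  · simpa [iInf_icbObjective_neg] using
      this (p := -p) (c := -c) (by simpa) (by simp [hc]) (by linarith)
  rcases eq_or_ne u 0 with rfl | hu
  · simp [iInf_icbObjective_zero_left hp]
  rw [abs_of_nonneg hc0]
  split_ifs with hpc
  · exact iInf_icbObjective_of_norm_le hu hc hpc.le
  rcases hp.lt_or_eq with hp1 | hp1
  · exact iInf_icbObjective_of_abs_le hu hc (by rw [abs_of_nonneg hc0]; linarith) hp1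
  · simp [iInf_icbObjective_of_norm_eq_one hp1 u, hp1]

theorem pointwise_icb_isotropic_general
    {m : ℕ} (p u : EuclideanSpace ℝ (Fin m)) (hp : ‖p‖ ≤ 1)
    (φ : ℝ) (hφ : ⟪u, p⟫ = ‖u‖ * ‖p‖ * Real.cos φ) :
    (⨅ z : EuclideanSpace ℝ (Fin m),
        ((‖u - z‖ - ⟪p, u - z⟫) + (‖z‖ + ⟪p, z⟫)))
      = if ‖p‖ < |Real.cos φ| then ‖u‖ * (1 - |Real.cos φ| * ‖p‖)
        else ‖u‖ * |Real.sin φ| * Real.sqrt (1 - ‖p‖^2) := by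
  rw [Real.abs_sin_eq_sqrt_one_sub_cos_sq]
  exact iInf_icbObjective hp hφ

/-- For `p ∈ ℝ^m` with `|p| ≤ 1`, `u ∈ ℝ^m`, and `φ` the angle
between `u` and `p` (with `φ = 0` when `u = 0` or `p = 0`), the pointwise
infimal convolution `inf_z (|u-z| - p·(u-z)) + (|z| + p·z)` equals
`|u|(1 - |cos φ||p|)` if `|p| < |cos φ|`, and `|u||sin φ|√(1-|p|²)` if
`|p| ≥ |cos φ|`. -/
theorem pointwise_icb_isotropic
    {m : ℕ} (p u : EuclideanSpace ℝ (Fin m)) (hp : ‖p‖ ≤ 1)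
    (φ : ℝ) (hφ : ⟪u, p⟫ = ‖u‖ * ‖p‖ * Real.cos φ)
    (hφ0 : u = 0 ∨ p = 0 → φ = 0) :
    (⨅ z : EuclideanSpace ℝ (Fin m),
        ((‖u - z‖ - ⟪p, u - z⟫) + (‖z‖ + ⟪p, z⟫)))
      = if ‖p‖ < |Real.cos φ| then ‖u‖ * (1 - |Real.cos φ| * ‖p‖)
        else ‖u‖ * |Real.sin φ| * Real.sqrt (1 - ‖p‖^2) :=
  pointwise_icb_isotropic_general p u hp φ hφ
end

section
/- Let Γ : H → ℓ¹(ℝ^m) be linear and bounded from a Hilbert space H, J(u) = ‖Γu‖_{ℓ¹(ℝ^m)}, and suppose p_α = Γ* q_α with q_α ∈ ∂‖·‖_{ℓ¹(ℝ^m)}(Γ u_α) (so p_α ∈ ∂J(u_α)). Then for all u: [D_{ℓ¹(ℝ^m)}^{q_α}(·, Γu_α) □ D_{ℓ¹(ℝ^m)}^{-q_α}(·, -Γu_α)](Γu) ≤ [D_J^{p_α}(·, u_α) □ D_J^{-p_α}(·, -u_α)](u), with equality if Γ is surjective. -/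
open RealInnerProductSpace

/-! The infimal convolution over decompositions `u = φ + ψ` in `H` is an infimum over a subset of
the decompositions `Γu = w₁ + w₂` in `ℓ¹`, namely those of the form `w₁ = Γφ`, `w₂ = Γψ`; when `Γ`
is surjective every decomposition of `Γu` arises this way. The infimum over the larger set is
finite because `‖q i‖ ≤ 1` makes both Bregman distances nonnegative. -/

section InfConv

variable {α F : Type*} [AddCommGroup α] [AddCommGroup F]

/-- Its infimum is the infimal convolution `(f □ g) x`. -/
def infConvValues (f g : F → ℝ) (x : F) : Set ℝ :=
  {r | ∃ y z, y + z = x ∧ r = f y + g z}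

lemma infConvValues_nonempty (f g : F → ℝ) (x : F) : (infConvValues f g x).Nonempty :=
  ⟨_, x, 0, add_zero x, rfl⟩

lemma bddBelow_infConvValues {f g : F → ℝ} (hf : ∀ y, 0 ≤ f y) (hg : ∀ z, 0 ≤ g z) (x : F) :
    BddBelow (infConvValues f g x) := by
  refine ⟨0, ?_⟩
  rintro r ⟨y, z, -, rfl⟩
  exact add_nonneg (hf y) (hg z)

lemma infConvValues_comp_subset (Γ : α →+ F) (f g : F → ℝ) (u : α) :
    infConvValues (f ∘ Γ) (g ∘ Γ) u ⊆ infConvValues f g (Γ u) := by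
  rintro r ⟨φ, ψ, rfl, rfl⟩
  exact ⟨Γ φ, Γ ψ, (map_add Γ φ ψ).symm, rfl⟩

lemma infConvValues_comp_of_surjective {Γ : α →+ F} (hΓ : Function.Surjective Γ)
    (f g : F → ℝ) (u : α) :
    infConvValues (f ∘ Γ) (g ∘ Γ) u = infConvValues f g (Γ u) := by
  refine (infConvValues_comp_subset Γ f g u).antisymm ?_
  rintro r ⟨w₁, w₂, hw, rfl⟩
  obtain ⟨φ, rfl⟩ := hΓ w₁
  refine ⟨φ, u - φ, add_sub_cancel φ u, ?_⟩
  rw [Function.comp_apply, Function.comp_apply, map_sub, ← hw, add_sub_cancel_left]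

end InfConv

section LOne

variable {ι E : Type*} [NormedAddCommGroup E]

lemma lp.summable_norm_of_one (w : lp (fun _ : ι => E) 1) : Summable fun i => ‖w i‖ := by
  simpa using (lp.memℓp w).summable (by norm_num)

variable [InnerProductSpace ℝ E]

lemma abs_tsum_inner_le_tsum_norm {q : ι → E} (hq : ∀ i, ‖q i‖ ≤ 1)
    (w : lp (fun _ : ι => E) 1) :
    |∑' i, ⟪q i, w i⟫| ≤ ∑' i, ‖w i‖ := by
  have hle : ∀ i, ‖⟪q i, w i⟫‖ ≤ ‖w i‖ := fun i =>
    calc ‖⟪q i, w i⟫‖ ≤ ‖q i‖ * ‖w i‖ := norm_inner_le_norm _ _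
      _ ≤ ‖w i‖ := mul_le_of_le_one_left (norm_nonneg _) (hq i)
  have hsum := lp.summable_norm_of_one w
  calc |∑' i, ⟪q i, w i⟫| ≤ ∑' i, ‖⟪q i, w i⟫‖ :=
        norm_tsum_le_tsum_norm (hsum.of_nonneg_of_le (fun _ => norm_nonneg _) hle)
    _ ≤ ∑' i, ‖w i‖ :=
        (hsum.of_nonneg_of_le (fun _ => norm_nonneg _) hle).tsum_le_tsum hle hsum

lemma tsum_norm_sub_tsum_inner_nonneg {q : ι → E} (hq : ∀ i, ‖q i‖ ≤ 1)
    (w : lp (fun _ : ι => E) 1) :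
    0 ≤ (∑' i, ‖w i‖) - ∑' i, ⟪q i, w i⟫ :=
  sub_nonneg.mpr (le_of_abs_le (abs_tsum_inner_le_tsum_norm hq w))

lemma tsum_norm_add_tsum_inner_nonneg {q : ι → E} (hq : ∀ i, ‖q i‖ ≤ 1)
    (w : lp (fun _ : ι => E) 1) :
    0 ≤ (∑' i, ‖w i‖) + ∑' i, ⟪q i, w i⟫ := by
  linarith [neg_abs_le (∑' i, ⟪q i, w i⟫), abs_tsum_inner_le_tsum_norm hq w]

end LOne

theorem icb_chain_rule_inequality_general
    {H : Type*} [NormedAddCommGroup H] [NormedSpace ℝ H] {m : ℕ}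
    (Γ : H →L[ℝ] lp (fun _ : ℕ => EuclideanSpace ℝ (Fin m)) 1)
    (q : ℕ → EuclideanSpace ℝ (Fin m))
    (hq1 : ∀ i, ‖q i‖ ≤ 1)
    (u : H) :
    (sInf {r : ℝ | ∃ w₁ w₂ : lp (fun _ : ℕ => EuclideanSpace ℝ (Fin m)) 1,
        w₁ + w₂ = Γ u ∧
        r = ((∑' i, ‖w₁ i‖) - (∑' i, ⟪q i, w₁ i⟫))
          + ((∑' i, ‖w₂ i‖) + (∑' i, ⟪q i, w₂ i⟫))}
      ≤ sInf {r : ℝ | ∃ φ ψ : H, φ + ψ = u ∧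
        r = ((∑' i, ‖(Γ φ) i‖) - (∑' i, ⟪q i, (Γ φ) i⟫))
          + ((∑' i, ‖(Γ ψ) i‖) + (∑' i, ⟪q i, (Γ ψ) i⟫))}) ∧
    (Function.Surjective Γ →
      sInf {r : ℝ | ∃ w₁ w₂ : lp (fun _ : ℕ => EuclideanSpace ℝ (Fin m)) 1,
        w₁ + w₂ = Γ u ∧
        r = ((∑' i, ‖w₁ i‖) - (∑' i, ⟪q i, w₁ i⟫))
          + ((∑' i, ‖w₂ i‖) + (∑' i, ⟪q i, w₂ i⟫))}
      = sInf {r : ℝ | ∃ φ ψ : H, φ + ψ = u ∧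
        r = ((∑' i, ‖(Γ φ) i‖) - (∑' i, ⟪q i, (Γ φ) i⟫))
          + ((∑' i, ‖(Γ ψ) i‖) + (∑' i, ⟪q i, (Γ ψ) i⟫))}) := by
  -- `Dq = D^{q}(·, Γuα)` and `Dnegq = D^{-q}(·, -Γuα)`, by one-homogeneity of the `ℓ¹` norm
  let Dq : lp (fun _ : ℕ => EuclideanSpace ℝ (Fin m)) 1 → ℝ :=
    fun w => (∑' i, ‖w i‖) - ∑' i, ⟪q i, w i⟫
  let Dnegq : lp (fun _ : ℕ => EuclideanSpace ℝ (Fin m)) 1 → ℝ :=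
    fun w => (∑' i, ‖w i‖) + ∑' i, ⟪q i, w i⟫
  let Γ' := Γ.toLinearMap.toAddMonoidHom
  change sInf (infConvValues Dq Dnegq (Γ' u)) ≤ sInf (infConvValues (Dq ∘ Γ') (Dnegq ∘ Γ') u) ∧
    (Function.Surjective Γ' →
      sInf (infConvValues Dq Dnegq (Γ' u)) = sInf (infConvValues (Dq ∘ Γ') (Dnegq ∘ Γ') u))
  have hbdd : BddBelow (infConvValues Dq Dnegq (Γ' u)) :=
    bddBelow_infConvValues (tsum_norm_sub_tsum_inner_nonneg hq1)
      (tsum_norm_add_tsum_inner_nonneg hq1) _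
  exact ⟨csInf_le_csInf hbdd (infConvValues_nonempty _ _ u) (infConvValues_comp_subset Γ' _ _ u),
    fun hΓ => by rw [infConvValues_comp_of_surjective hΓ]⟩

/-- For `Γ : H → ℓ¹(ℝ^m)` linear and bounded,
`J(u) = ‖Γu‖_{ℓ¹(ℝ^m)}` and `p_α = Γ* q_α` with
`q_α ∈ ∂‖·‖_{ℓ¹(ℝ^m)}(Γu_α)`, the infimal convolution of the `ℓ¹(ℝ^m)`-Bregman
distances evaluated at `Γu` is at most the infimal convolution of the
`J`-Bregman distances evaluated at `u`, with equality when `Γ` is surjective. -/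
theorem icb_chain_rule_inequality
    {H : Type*} [NormedAddCommGroup H] [NormedSpace ℝ H] {m : ℕ}
    (Γ : H →L[ℝ] lp (fun _ : ℕ => EuclideanSpace ℝ (Fin m)) 1)
    (uα : H) (q : ℕ → EuclideanSpace ℝ (Fin m))
    (hq1 : ∀ i, ‖q i‖ ≤ 1)
    (hq2 : ∀ i, (Γ uα : ∀ _ : ℕ, EuclideanSpace ℝ (Fin m)) i ≠ 0 →
      q i = ‖(Γ uα : ∀ _ : ℕ, EuclideanSpace ℝ (Fin m)) i‖⁻¹ •
        (Γ uα : ∀ _ : ℕ, EuclideanSpace ℝ (Fin m)) i)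
    (u : H) :
    (sInf {r : ℝ | ∃ w₁ w₂ : lp (fun _ : ℕ => EuclideanSpace ℝ (Fin m)) 1,
        w₁ + w₂ = Γ u ∧
        r = ((∑' i, ‖w₁ i‖) - (∑' i, ⟪q i, w₁ i⟫))
          + ((∑' i, ‖w₂ i‖) + (∑' i, ⟪q i, w₂ i⟫))}
      ≤ sInf {r : ℝ | ∃ φ ψ : H, φ + ψ = u ∧
        r = ((∑' i, ‖(Γ φ) i‖) - (∑' i, ⟪q i, (Γ φ) i⟫))
          + ((∑' i, ‖(Γ ψ) i‖) + (∑' i, ⟪q i, (Γ ψ) i⟫))}) ∧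
    (Function.Surjective Γ →
      sInf {r : ℝ | ∃ w₁ w₂ : lp (fun _ : ℕ => EuclideanSpace ℝ (Fin m)) 1,
        w₁ + w₂ = Γ u ∧
        r = ((∑' i, ‖w₁ i‖) - (∑' i, ⟪q i, w₁ i⟫))
          + ((∑' i, ‖w₂ i‖) + (∑' i, ⟪q i, w₂ i⟫))}
      = sInf {r : ℝ | ∃ φ ψ : H, φ + ψ = u ∧
        r = ((∑' i, ‖(Γ φ) i‖) - (∑' i, ⟪q i, (Γ φ) i⟫))
          + ((∑' i, ‖(Γ ψ) i‖) + (∑' i, ⟪q i, (Γ ψ) i⟫))}) :=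
  icb_chain_rule_inequality_general Γ q hq1 u
end

section
/- Let A : X → Y be bounded linear between Hilbert spaces, J convex one-homogeneous, and u^λ a singular vector, i.e. λ A*A u^λ ∈ ∂J(u^λ) for some λ > 0. Then for data f = c A u^λ with c > αλ, the element u_α = (c - αλ) u^λ is a minimizer of u ↦ (1/2)‖Au - f‖² + αJ(u), and p_α = λ A*A u^λ satisfies p_α = (1/α)A*(f - Au_α) ∈ ∂J(u_α). -/
open RealInnerProductSpace

/-!
For one-homogeneous `J`, testing the subgradient inequality at `0` and `2u` gives `⟪p, u⟫ = J u`,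
so `p ∈ ∂J(u)` amounts to `⟪p, ·⟫ ≤ J`, which does not depend on the scale of `u`. Hence
`p_α = λA*Au^λ ∈ ∂J(u_α)`, and since `f - Au_α = αλ Au^λ` the optimality condition
`A*(f - Au_α) = α p_α` holds. Expanding the square, this condition together with the subgradient
inequality already gives minimality.
-/

section Subgradient

variable {X : Type*} [NormedAddCommGroup X] [InnerProductSpace ℝ X]

def HasSubgradientAt (J : X → ℝ) (p u : X) : Prop :=
  ∀ w : X, J u + ⟪p, w - u⟫ ≤ J w

variable {J : X → ℝ} {p u : X}

theorem HasSubgradientAt.inner_eq (hJ : ∀ t : ℝ, 0 ≤ t → ∀ u : X, J (t • u) = t * J u)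
    (hp : HasSubgradientAt J p u) : ⟪p, u⟫ = J u := by
  have hJ0 : J 0 = 0 := by simpa using hJ 0 le_rfl 0
  have h0 := hp 0
  have h2 := hp ((2 : ℝ) • u)
  rw [hJ 2 zero_le_two] at h2
  simp only [zero_sub, inner_neg_right, hJ0] at h0
  rw [show (2 : ℝ) • u - u = u by module] at h2
  linarith

theorem HasSubgradientAt.inner_le (hJ : ∀ t : ℝ, 0 ≤ t → ∀ u : X, J (t • u) = t * J u)
    (hp : HasSubgradientAt J p u) (w : X) : ⟪p, w⟫ ≤ J w := by
  have := hp w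
  rw [inner_sub_right, hp.inner_eq hJ] at this
  linarith

theorem HasSubgradientAt.smul (hJ : ∀ t : ℝ, 0 ≤ t → ∀ u : X, J (t • u) = t * J u)
    (hp : HasSubgradientAt J p u) {t : ℝ} (ht : 0 ≤ t) : HasSubgradientAt J p (t • u) := by
  intro w
  rw [hJ t ht, inner_sub_right, inner_smul_right, hp.inner_eq hJ]
  linarith [hp.inner_le hJ w]

end Subgradient

theorem HasSubgradientAt.isMinimizer_of_adjoint_eq
    {X Y : Type*} [NormedAddCommGroup X] [InnerProductSpace ℝ X] [CompleteSpace X]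
    [NormedAddCommGroup Y] [InnerProductSpace ℝ Y] [CompleteSpace Y]
    {A : X →L[ℝ] Y} {J : X → ℝ} {p u : X} {f : Y} {α : ℝ} (hα : 0 ≤ α)
    (hp : HasSubgradientAt J p u) (hopt : ContinuousLinearMap.adjoint A (f - A u) = α • p)
    (w : X) : (1/2) * ‖A u - f‖^2 + α * J u ≤ (1/2) * ‖A w - f‖^2 + α * J w := by
  have hcross : ⟪A u - f, A w - A u⟫ = -(α * ⟪p, w - u⟫) := by
    rw [← map_sub, ← ContinuousLinearMap.adjoint_inner_left, ← neg_sub f, map_neg, hopt,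
      inner_neg_left, inner_smul_left, RCLike.conj_to_real]
  have hexpand : ‖A w - f‖^2 = ‖A u - f‖^2 + 2 * ⟪A u - f, A w - A u⟫ + ‖A w - A u‖^2 := by
    rw [← norm_add_sq_real, sub_add_sub_cancel']
  have hsub := mul_le_mul_of_nonneg_left (hp w) hα
  nlinarith [sq_nonneg ‖A w - A u‖]

theorem singular_vector_solution_general
    {X Y : Type*} [NormedAddCommGroup X] [InnerProductSpace ℝ X] [CompleteSpace X]
    [NormedAddCommGroup Y] [InnerProductSpace ℝ Y] [CompleteSpace Y]
    (A : X →L[ℝ] Y) (J : X → ℝ)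
    (hJhom : ∀ (t : ℝ), 0 ≤ t → ∀ u : X, J (t • u) = t * J u)
    (lam : ℝ) (ulam : X)
    (hsv : ∀ w : X, J ulam + ⟪lam • ContinuousLinearMap.adjoint A (A ulam), w - ulam⟫ ≤ J w)
    (α : ℝ) (hα : 0 < α) (c : ℝ) (hc : α * lam < c)
    (f : Y) (hf : f = c • A ulam) :
    (∀ w : X, (1/2) * ‖A ((c - α * lam) • ulam) - f‖^2 + α * J ((c - α * lam) • ulam)
        ≤ (1/2) * ‖A w - f‖^2 + α * J w) ∧
    lam • ContinuousLinearMap.adjoint A (A ulam)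
      = (1/α) • ContinuousLinearMap.adjoint A (f - A ((c - α * lam) • ulam)) ∧
    (∀ w : X, J ((c - α * lam) • ulam)
        + ⟪lam • ContinuousLinearMap.adjoint A (A ulam), w - (c - α * lam) • ulam⟫ ≤ J w) := by
  set p := lam • ContinuousLinearMap.adjoint A (A ulam)
  have hsub : HasSubgradientAt J p ((c - α * lam) • ulam) :=
    HasSubgradientAt.smul hJhom hsv (by linarith)
  have hopt : ContinuousLinearMap.adjoint A (f - A ((c - α * lam) • ulam)) = α • p := by
    rw [hf, map_smul, ← sub_smul, sub_sub_cancel, map_smul, smul_smul, mul_comm]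
  refine ⟨hsub.isMinimizer_of_adjoint_eq hα.le hopt, ?_, hsub⟩
  rw [hopt, smul_smul, one_div_mul_cancel hα.ne', one_smul]

/-- For a singular vector `u^λ` (i.e. `λA*Au^λ ∈ ∂J(u^λ)`) of a
convex one-homogeneous `J`, and data `f = cAu^λ` with `c > αλ`, the element
`u_α = (c - αλ)u^λ` minimizes `u ↦ (1/2)‖Au - f‖² + αJ(u)`, and
`p_α = λA*Au^λ` satisfies `p_α = (1/α)A*(f - Au_α)` and `p_α ∈ ∂J(u_α)`. -/
theorem singular_vector_solution
    {X Y : Type*} [NormedAddCommGroup X] [InnerProductSpace ℝ X] [CompleteSpace X]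
    [NormedAddCommGroup Y] [InnerProductSpace ℝ Y] [CompleteSpace Y]
    (A : X →L[ℝ] Y) (J : X → ℝ) (hJconv : ConvexOn ℝ Set.univ J)
    (hJhom : ∀ (t : ℝ), 0 ≤ t → ∀ u : X, J (t • u) = t * J u)
    (lam : ℝ) (hlam : 0 < lam) (ulam : X)
    (hsv : ∀ w : X, J ulam + ⟪lam • ContinuousLinearMap.adjoint A (A ulam), w - ulam⟫ ≤ J w)
    (α : ℝ) (hα : 0 < α) (c : ℝ) (hc : α * lam < c)
    (f : Y) (hf : f = c • A ulam) :
    (∀ w : X, (1/2) * ‖A ((c - α * lam) • ulam) - f‖^2 + α * J ((c - α * lam) • ulam)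
        ≤ (1/2) * ‖A w - f‖^2 + α * J w) ∧
    lam • ContinuousLinearMap.adjoint A (A ulam)
      = (1/α) • ContinuousLinearMap.adjoint A (f - A ((c - α * lam) • ulam)) ∧
    (∀ w : X, J ((c - α * lam) • ulam)
        + ⟪lam • ContinuousLinearMap.adjoint A (A ulam), w - (c - α * lam) • ulam⟫ ≤ J w) :=
  singular_vector_solution_general A J hJhom lam ulam hsv α hα c hc f hf
end

section
/- Let A : X → Y be bounded linear between a Hilbert space X and Hilbert space Y, α > 0, and consider Tikhonov regularization: u_α minimizing (1/2)‖Au - f‖² + (α/2)‖u‖². Assume the source condition u* = A*w* holds and f* = Au*. Then with w_α = (1/α)(f - Au_α), the identity ‖Au_α - Au*‖² + α²‖w_α - w*‖² + 2α‖u_α - u*‖² = ‖f - Au*‖² + α²‖w*‖² - 2α⟨f - Au*, w*⟩ holds. -/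
open RealInnerProductSpace

/-!
The first-order optimality condition `A†(A u_α - f) + α u_α = 0` says `u_α = A† w_α`. Hence
`A(u_α - u*) + α(w_α - w*) = f - A u* - α w*`, and expanding the squared norm of both sides
gives the identity, because the cross term `⟪A(u_α - u*), w_α - w*⟫ = ⟪u_α - u*, A†(w_α - w*)⟫`
is `‖u_α - u*‖²`.
-/

namespace Tikhonov

variable {X Y : Type*} [NormedAddCommGroup X] [InnerProductSpace ℝ X] [CompleteSpace X]
  [NormedAddCommGroup Y] [InnerProductSpace ℝ Y] [CompleteSpace Y]

noncomputable def functional (A : X →L[ℝ] Y) (f : Y) (α : ℝ) (u : X) : ℝ :=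
  (1/2) * ‖A u - f‖^2 + (α/2) * ‖u‖^2

theorem hasFDerivAt_functional (A : X →L[ℝ] Y) (f : Y) (α : ℝ) (u : X) :
    HasFDerivAt (functional A f α)
      (innerSL ℝ (ContinuousLinearMap.adjoint A (A u - f) + α • u)) u := by
  have hfit := ((A.hasFDerivAt (x := u)).sub_const f).norm_sq.const_mul (1/2 : ℝ)
  have hpen := (hasFDerivAt_id u).norm_sq.const_mul (α/2)
  refine (hfit.add hpen).congr_fderiv ?_
  ext v
  simp only [add_apply, smul_apply, ContinuousLinearMap.comp_apply, innerSL_apply_apply, id,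
    ContinuousLinearMap.id_apply, smul_eq_mul, inner_add_left, real_inner_smul_left,
    ContinuousLinearMap.adjoint_inner_left]
  ring

theorem adjoint_apply_sub_add_smul_eq_zero_of_isMin (A : X →L[ℝ] Y) (f : Y) (α : ℝ) {u : X}
    (hu : ∀ w, functional A f α u ≤ functional A f α w) :
    ContinuousLinearMap.adjoint A (A u - f) + α • u = 0 := by
  have hmin : IsLocalMin (functional A f α) u := Filter.Eventually.of_forall hu
  rw [← innerSL_inj (𝕜 := ℝ), map_zero]
  exact hmin.hasFDerivAt_eq_zero (hasFDerivAt_functional A f α u)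

theorem eq_adjoint_of_isMin (A : X →L[ℝ] Y) (f : Y) {α : ℝ} (hα : α ≠ 0) {u : X}
    (hu : ∀ w, functional A f α u ≤ functional A f α w) :
    u = ContinuousLinearMap.adjoint A ((1/α) • (f - A u)) := by
  have hres : ContinuousLinearMap.adjoint A (f - A u) = α • u := by
    rw [← neg_sub, map_neg, neg_eq_iff_add_eq_zero]
    exact adjoint_apply_sub_add_smul_eq_zero_of_isMin A f α hu
  rw [map_smul, hres, smul_smul, one_div_mul_cancel hα, one_smul]

theorem norm_sub_add_smul_sub_sq_of_eq_adjoint (A : X →L[ℝ] Y) (α : ℝ) {u u' : X} {w w' : Y}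
    (hu : u = ContinuousLinearMap.adjoint A w) (hu' : u' = ContinuousLinearMap.adjoint A w') :
    ‖A u - A u' + α • (w - w')‖^2
      = ‖A u - A u'‖^2 + α^2 * ‖w - w'‖^2 + 2 * α * ‖u - u'‖^2 := by
  have hcross : ⟪A u - A u', w - w'⟫ = ‖u - u'‖^2 := by
    rw [← map_sub, ← ContinuousLinearMap.adjoint_inner_right, map_sub, ← hu, ← hu',
      real_inner_self_eq_norm_sq]
  rw [norm_add_sq_real, real_inner_smul_right, hcross, norm_smul, mul_pow, Real.norm_eq_abs,
    sq_abs]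
  ring

end Tikhonov

theorem tikhonov_bias_variance_identity_general
    {X Y : Type*} [NormedAddCommGroup X] [InnerProductSpace ℝ X] [CompleteSpace X]
    [NormedAddCommGroup Y] [InnerProductSpace ℝ Y] [CompleteSpace Y]
    (A : X →L[ℝ] Y) (α : ℝ) (hα : 0 < α) (f : Y)
    (wstar : Y) (ustar : X) (hsource : ustar = ContinuousLinearMap.adjoint A wstar)
    (uα : X)
    (huα : ∀ w : X, (1/2) * ‖A uα - f‖^2 + (α/2) * ‖uα‖^2
      ≤ (1/2) * ‖A w - f‖^2 + (α/2) * ‖w‖^2)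
    (wα : Y) (hwα : wα = (1/α) • (f - A uα)) :
    ‖A uα - A ustar‖^2 + α^2 * ‖wα - wstar‖^2 + 2 * α * ‖uα - ustar‖^2
      = ‖f - A ustar‖^2 + α^2 * ‖wstar‖^2 - 2 * α * ⟪f - A ustar, wstar⟫ := by
  have hadj : uα = ContinuousLinearMap.adjoint A wα := by
    rw [hwα]
    exact Tikhonov.eq_adjoint_of_isMin A f hα.ne' huα
  have hsplit : A uα - A ustar + α • (wα - wstar) = (f - A ustar) - α • wstar := by
    rw [hwα, smul_sub, smul_smul, mul_one_div_cancel hα.ne', one_smul]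
    abel
  rw [← Tikhonov.norm_sub_add_smul_sub_sq_of_eq_adjoint A α hadj hsource, hsplit,
    norm_sub_sq_real, real_inner_smul_right, norm_smul, mul_pow, Real.norm_eq_abs, sq_abs]
  ring

/-- For Tikhonov regularization with source condition
`u* = A*w*` and `f* = Au*`, with `w_α = (1/α)(f - Au_α)`, the identity
`‖Au_α - Au*‖² + α²‖w_α - w*‖² + 2α‖u_α - u*‖²
  = ‖f - Au*‖² + α²‖w*‖² - 2α⟨f - Au*, w*⟩` holds. -/
theorem tikhonov_bias_variance_identity
    {X Y : Type*} [NormedAddCommGroup X] [InnerProductSpace ℝ X] [CompleteSpace X]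
    [NormedAddCommGroup Y] [InnerProductSpace ℝ Y] [CompleteSpace Y]
    (A : X →L[ℝ] Y) (α : ℝ) (hα : 0 < α) (f : Y)
    (wstar : Y) (ustar : X) (hsource : ustar = ContinuousLinearMap.adjoint A wstar)
    (fstar : Y) (hfstar : fstar = A ustar)
    (uα : X)
    (huα : ∀ w : X, (1/2) * ‖A uα - f‖^2 + (α/2) * ‖uα‖^2
      ≤ (1/2) * ‖A w - f‖^2 + (α/2) * ‖w‖^2)
    (wα : Y) (hwα : wα = (1/α) • (f - A uα)) :
    ‖A uα - A ustar‖^2 + α^2 * ‖wα - wstar‖^2 + 2 * α * ‖uα - ustar‖^2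
      = ‖f - A ustar‖^2 + α^2 * ‖wstar‖^2 - 2 * α * ⟪f - A ustar, wstar⟫ :=
  tikhonov_bias_variance_identity_general A α hα f wstar ustar hsource uα huα wα hwα
end

section
/- Let A : ℓ^r → ℓ² (r > 1) be bounded linear, α > 0, and let u_α(f), u_α(f̃) be minimizers of u ↦ (1/2)‖Au - f‖²_{ℓ²} + α‖u‖_{ℓ¹} for data f and f̃ respectively. Then ‖A u_α(f) - A u_α(f̃)‖_{ℓ²} ≤ ‖f - f̃‖_{ℓ²}. -/
/-!
A minimizer `u` of `w ↦ ½‖A w - f‖² + R w` over a convex set, with `R` convex, satisfies the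
variational inequality `0 ≤ ⟪A u - f, A w - A u⟫ + R w - R u`: compare `u` with the points
`(1 - t) • u + t • w` of the segment and let `t → 0⁺`. Adding this inequality for the two
minimizers, each tested at the other one, cancels the regularization terms and leaves
`‖A u - A v‖² ≤ ⟪f - f', A u - A v⟫`, and Cauchy–Schwarz finishes.
-/

open scoped ENNReal RealInnerProductSpace
open Filter Topology Set

theorem nonneg_of_forall_nonneg_add_mul {C D : ℝ}
    (h : ∀ t ∈ Ioo (0 : ℝ) 1, 0 ≤ C + t * D) : 0 ≤ C := by
  have hlim : Tendsto (fun t : ℝ => C + t * D) (𝓝[>] 0) (𝓝 C) := by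
    have hcont : Continuous fun t : ℝ => C + t * D := by fun_prop
    simpa using (hcont.tendsto 0).mono_left nhdsWithin_le_nhds
  exact ge_of_tendsto hlim (eventually_of_mem (Ioo_mem_nhdsGT one_pos) h)

theorem inner_sub_add_inner_sub {H : Type*} [NormedAddCommGroup H] [InnerProductSpace ℝ H]
    (a b f f' : H) :
    ⟪a - f, b - a⟫ + ⟪b - f', a - b⟫ = ⟪f - f', a - b⟫ - ‖a - b‖ ^ 2 := by
  have hdiff : (b - f') - (a - f) = (f - f') - (a - b) := by abel
  rw [← neg_sub a b, inner_neg_right, neg_add_eq_sub, ← inner_sub_left, hdiff, inner_sub_left,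
    real_inner_self_eq_norm_sq]

theorem norm_le_norm_of_norm_sq_le_inner {H : Type*} [NormedAddCommGroup H]
    [InnerProductSpace ℝ H] {x y : H} (h : ‖x‖ ^ 2 ≤ ⟪y, x⟫) : ‖x‖ ≤ ‖y‖ := by
  have hcs : ‖x‖ ^ 2 ≤ ‖y‖ * ‖x‖ := h.trans (real_inner_le_norm y x)
  nlinarith [norm_nonneg x, norm_nonneg y]

section Tikhonov

variable {E H : Type*} [AddCommGroup E] [Module ℝ E] [NormedAddCommGroup H]
  [InnerProductSpace ℝ H] (A : E →ₗ[ℝ] H) {R : E → ℝ} {S : Set E}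

theorem inner_add_sub_nonneg_of_isMinOn (hR : ConvexOn ℝ S R) {f : H} {u v : E} (hu : u ∈ S)
    (hv : v ∈ S) (hmin : IsMinOn (fun w => 1 / 2 * ‖A w - f‖ ^ 2 + R w) S u) :
    0 ≤ ⟪A u - f, A v - A u⟫ + (R v - R u) := by
  refine nonneg_of_forall_nonneg_add_mul (D := ‖A v - A u‖ ^ 2 / 2) fun t ⟨ht0, ht1⟩ => ?_
  have hw : (1 - t) • u + t • v ∈ S := hR.1 hu hv (by linarith) ht0.le (by ring)
  have hRw : R ((1 - t) • u + t • v) ≤ (1 - t) * R u + t * R v :=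
    hR.2 hu hv (by linarith) ht0.le (by ring)
  have hAw : A ((1 - t) • u + t • v) - f = (A u - f) + t • (A v - A u) := by
    simp only [map_add, map_smul]
    module
  have hexp : ‖A ((1 - t) • u + t • v) - f‖ ^ 2
      = ‖A u - f‖ ^ 2 + 2 * t * ⟪A u - f, A v - A u⟫ + t ^ 2 * ‖A v - A u‖ ^ 2 := by
    rw [hAw, norm_add_sq_real, real_inner_smul_right, norm_smul, mul_pow, Real.norm_eq_abs,
      sq_abs]
    ring
  have hle := isMinOn_iff.1 hmin _ hw
  simp only [hexp] at hle
  have hprod : 0 ≤ t * (⟪A u - f, A v - A u⟫ + (R v - R u) + t * (‖A v - A u‖ ^ 2 / 2)) := by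
    linarith
  exact nonneg_of_mul_nonneg_right hprod ht0

theorem norm_map_sub_le_of_isMinOn (hR : ConvexOn ℝ S R) {f f' : H} {u v : E} (hu : u ∈ S)
    (hv : v ∈ S) (humin : IsMinOn (fun w => 1 / 2 * ‖A w - f‖ ^ 2 + R w) S u)
    (hvmin : IsMinOn (fun w => 1 / 2 * ‖A w - f'‖ ^ 2 + R w) S v) :
    ‖A u - A v‖ ≤ ‖f - f'‖ := by
  have hu' := inner_add_sub_nonneg_of_isMinOn A hR hu hv humin
  have hv' := inner_add_sub_nonneg_of_isMinOn A hR hv hu hvmin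
  refine norm_le_norm_of_norm_sq_le_inner ?_
  linarith [inner_sub_add_inner_sub (A u) (A v) f f']

end Tikhonov

theorem lp.convexOn_tsum_norm {ι : Type*} {E : ι → Type*} [∀ i, NormedAddCommGroup (E i)]
    [∀ i, NormedSpace ℝ (E i)] {p : ℝ≥0∞} :
    ConvexOn ℝ {w : lp E p | Memℓp (⇑w) 1} fun w => ∑' i, ‖w i‖ := by
  have hsum {x : ∀ i, E i} (hx : Memℓp x 1) : Summable fun i => ‖x i‖ := by
    simpa using hx.summable (by norm_num)
  have hconv : Convex ℝ {w : lp E p | Memℓp (⇑w) 1} := fun x hx y hy a b _ _ _ => by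
    rw [mem_ofPred_eq, lp.coeFn_add, lp.coeFn_smul, lp.coeFn_smul]
    exact (hx.const_smul a).add (hy.const_smul b)
  refine ⟨hconv, fun x hx y hy a b ha hb hab => ?_⟩
  calc ∑' i, ‖(a • x + b • y) i‖
      ≤ ∑' i, (a * ‖x i‖ + b * ‖y i‖) := by
        refine Summable.tsum_le_tsum (fun i => ?_) (hsum (hconv hx hy ha hb hab))
          (((hsum hx).mul_left a).add ((hsum hy).mul_left b))
        rw [← norm_smul_of_nonneg ha, ← norm_smul_of_nonneg hb]
        exact norm_add_le (a • x i) (b • y i)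
    _ = a • ∑' i, ‖x i‖ + b • ∑' i, ‖y i‖ := by
        rw [Summable.tsum_add ((hsum hx).mul_left a) ((hsum hy).mul_left b), tsum_mul_left,
          tsum_mul_left, smul_eq_mul, smul_eq_mul]

theorem l1_regularization_stability_general
    (r : ℝ≥0∞) [Fact (1 ≤ r)]
    (A : lp (fun _ : ℕ => ℝ) r →L[ℝ] lp (fun _ : ℕ => ℝ) 2)
    (α : ℝ) (hα : 0 < α) (f f' : lp (fun _ : ℕ => ℝ) 2)
    (u v : lp (fun _ : ℕ => ℝ) r)
    (hu1 : Memℓp (u : ℕ → ℝ) 1) (hv1 : Memℓp (v : ℕ → ℝ) 1)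
    (hu : ∀ w : lp (fun _ : ℕ => ℝ) r, Memℓp (w : ℕ → ℝ) 1 →
      (1/2) * ‖A u - f‖^2 + α * (∑' i, |u i|)
        ≤ (1/2) * ‖A w - f‖^2 + α * (∑' i, |w i|))
    (hv : ∀ w : lp (fun _ : ℕ => ℝ) r, Memℓp (w : ℕ → ℝ) 1 →
      (1/2) * ‖A v - f'‖^2 + α * (∑' i, |v i|)
        ≤ (1/2) * ‖A w - f'‖^2 + α * (∑' i, |w i|)) :
    ‖A u - A v‖ ≤ ‖f - f'‖ := by
  have hR : ConvexOn ℝ {w : lp (fun _ : ℕ => ℝ) r | Memℓp (⇑w) 1}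
      fun w => α * ∑' i, |w i| :=
    (lp.convexOn_tsum_norm.smul hα.le).congr fun w _ => rfl
  exact norm_map_sub_le_of_isMinOn (A : lp (fun _ : ℕ => ℝ) r →ₗ[ℝ] lp (fun _ : ℕ => ℝ) 2) hR
    hu1 hv1 (isMinOn_iff.2 hu) (isMinOn_iff.2 hv)

/-- For `A : ℓ^r → ℓ²` (`r > 1`) bounded linear, `α > 0`, and
minimizers `u`, `v` of the `ℓ¹`-regularized least-squares problem for data
`f` and `f'` respectively, the stability estimate
`‖Au - Av‖_{ℓ²} ≤ ‖f - f'‖_{ℓ²}` holds. -/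
theorem l1_regularization_stability
    (r : ℝ≥0∞) [Fact (1 ≤ r)] (hr : 1 < r)
    (A : lp (fun _ : ℕ => ℝ) r →L[ℝ] lp (fun _ : ℕ => ℝ) 2)
    (α : ℝ) (hα : 0 < α) (f f' : lp (fun _ : ℕ => ℝ) 2)
    (u v : lp (fun _ : ℕ => ℝ) r)
    (hu1 : Memℓp (u : ℕ → ℝ) 1) (hv1 : Memℓp (v : ℕ → ℝ) 1)
    (hu : ∀ w : lp (fun _ : ℕ => ℝ) r, Memℓp (w : ℕ → ℝ) 1 →
      (1/2) * ‖A u - f‖^2 + α * (∑' i, |u i|)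
        ≤ (1/2) * ‖A w - f‖^2 + α * (∑' i, |w i|))
    (hv : ∀ w : lp (fun _ : ℕ => ℝ) r, Memℓp (w : ℕ → ℝ) 1 →
      (1/2) * ‖A v - f'‖^2 + α * (∑' i, |v i|)
        ≤ (1/2) * ‖A w - f'‖^2 + α * (∑' i, |w i|)) :
    ‖A u - A v‖ ≤ ‖f - f'‖ :=
  l1_regularization_stability_general r A α hα f f' u v hu1 hv1 hu hv
end

section
/- Let J be convex, absolutely one-homogeneous, proper on a Banach space X, and suppose u ↦ (1/2)‖Au‖² + J(u) is coercive, where A = B* for bounded linear B : Y → Z with X = Z*. Let p ∈ ∂J(0) be such that there exist w ∈ Y and 0 < τ < 1 with J*((p - Bw)/τ) = 0. Then every u in the set {u : J(u) = ⟨p,u⟩, ‖Au - f‖ ≤ ‖f‖} satisfies J(u) ≤ ‖w‖·‖Au‖/(1 - τ). -/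
open RealInnerProductSpace

theorem debiasing_coercivity_estimate_general
    {X Y : Type*} [NormedAddCommGroup X] [NormedSpace ℝ X]
    [NormedAddCommGroup Y] [InnerProductSpace ℝ Y]
    (A : X →L[ℝ] Y) (B : Y → (X →L[ℝ] ℝ))
    (hB : ∀ (y : Y) (x : X), B y x = ⟪y, A x⟫)
    (J : X → ℝ)
    (p : X →L[ℝ] ℝ)
    (w : Y) (τ : ℝ) (hτ : 0 < τ) (hτ1 : τ < 1)
    (hconj : ∀ u : X, (p u - B w u) / τ ≤ J u)
    (u : X) (hu1 : J u = p u) :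
    J u ≤ ‖w‖ * ‖A u‖ / (1 - τ) := by
  have hfenchel : J u - B w u ≤ τ * J u := by
    simpa only [hu1] using (div_le_iff₀' hτ).1 (hconj u)
  have hcauchy : B w u ≤ ‖w‖ * ‖A u‖ := hB w u ▸ real_inner_le_norm w (A u)
  rw [le_div_iff₀ (sub_pos.2 hτ1)]
  linarith

/-- Coercivity estimate for the debiasing step. Let `J` be
convex, absolutely one-homogeneous and proper, `A = B*` with
`B y = ⟪y, A·⟫`, `p ∈ ∂J(0)` such that `J*((p - Bw)/τ) = 0` for some `w` and
`0 < τ < 1`. Then every `u` with `J(u) = ⟨p,u⟩` and `‖Au - f‖ ≤ ‖f‖`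
satisfies `J(u) ≤ ‖w‖·‖Au‖/(1 - τ)`. -/
theorem debiasing_coercivity_estimate
    {X Y : Type*} [NormedAddCommGroup X] [NormedSpace ℝ X]
    [NormedAddCommGroup Y] [InnerProductSpace ℝ Y]
    (A : X →L[ℝ] Y) (B : Y → (X →L[ℝ] ℝ))
    (hB : ∀ (y : Y) (x : X), B y x = ⟪y, A x⟫)
    (J : X → ℝ) (hJconv : ConvexOn ℝ Set.univ J)
    (hJhom : ∀ (c : ℝ) (u : X), J (c • u) = |c| * J u)
    (p : X →L[ℝ] ℝ) (hp0 : ∀ u : X, p u ≤ J u)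
    (w : Y) (τ : ℝ) (hτ : 0 < τ) (hτ1 : τ < 1)
    (hconj : ∀ u : X, (p u - B w u) / τ ≤ J u)
    (f : Y) (u : X) (hu1 : J u = p u) (hu2 : ‖A u - f‖ ≤ ‖f‖) :
    J u ≤ ‖w‖ * ‖A u‖ / (1 - τ) :=
  debiasing_coercivity_estimate_general A B hB J p w τ hτ hτ1 hconj u hu1
end
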